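/- arXiv:1503.06536 — 8 statements merged into one kernel-verified Lean document; each statement's English description precedes it below -/
import Mathlib

section
/- Suppose the feasibility map FEA is resource monotone, for every input (s,p) the value W(s,p) := max_{o∈FEA(s,p)} min_{j∈N} u_j(o,p) is attained, and M is a mechanism such that for every input (s,p), M(s,p) ∈ FEA(s,p) and u_i(M(s,p),p) = W(s,p) for every agent i. Then M is group strategy-proof. -/
/-- The minimum utility over all agents (maxmin objective). -/
noncomputable def minUtil {n : ℕ} [NeZero n] {O P : Type*}
    (u : Fin n → O → P → ℝ) (o : O) (p : P) : ℝ :=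
  Finset.univ.inf' Finset.univ_nonempty fun i => u i o p

/-- If the feasibility map is resource monotone, the maxmin value
`W(s,p) = max_{o ∈ FEA(s,p)} min_j u_j(o,p)` is attained for every input, and `M` is a
mechanism that always outputs a feasible outcome giving every agent utility exactly
`W(s,p)`, then `M` is group strategy-proof. -/
theorem bring_down_mechanism_group_strategyproof
    (n : ℕ) [NeZero n]
    (S : Fin n → Type*) [∀ i, PartialOrder (S i)]
    (P O : Type*)
    (FEA : (∀ i, S i) → P → Set O)
    (u : Fin n → O → P → ℝ)
    -- resource monotonicity
    (hmono : ∀ (s : ∀ i, S i) (p : P) (i : Fin n) (s'i : S i), s'i ≤ s i →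
      FEA (Function.update s i s'i) p ⊆ FEA s p)
    -- the maxmin value W(s,p), attained over FEA(s,p)
    (W : (∀ i, S i) → P → ℝ)
    (hW : ∀ (s : ∀ i, S i) (p : P),
      IsGreatest {x : ℝ | ∃ o ∈ FEA s p, minUtil u o p = x} (W s p))
    -- the mechanism: feasible and gives every agent utility exactly W(s,p)
    (M : (∀ i, S i) → P → O)
    (hM : ∀ (s : ∀ i, S i) (p : P),
      M s p ∈ FEA s p ∧ ∀ i : Fin n, u i (M s p) p = W s p) :
    -- group strategy-proofness
    ∀ (s s' : ∀ i, S i) (p : P), (∀ i, s' i ≤ s i) →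
      ∀ i : Fin n, u i (M s' p) p ≤ u i (M s p) p := by
  intro s s' p hle i
  -- First show FEA s' p ⊆ FEA s p by bringing coordinates up one at a time.
  have key : ∀ (t : Finset (Fin n)) (s' : ∀ i, S i), (∀ i, s' i ≤ s i) →
      (∀ i ∉ t, s' i = s i) → FEA s' p ⊆ FEA s p := by
    intro t
    induction t using Finset.induction with
    | empty =>
        intro s' _ heq
        have : s' = s := funext fun i => heq i (Finset.notMem_empty i)
        rw [this]
    | @insert a t ha ih =>
        intro s' hle heq
        set s'' := Function.update s' a (s a) with hs''
        have h1 : FEA s' p ⊆ FEA s'' p := by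
          have hupd : s' = Function.update s'' a (s' a) := by
            funext j
            by_cases hj : j = a
            · subst hj; simp [hs'']
            · simp [hs'', Function.update_of_ne hj]
          have := hmono s'' p a (s' a) (by simp [hs'']; exact hle a)
          rwa [← hupd] at this
        refine h1.trans (ih s'' ?_ ?_)
        · intro j
          by_cases hj : j = a
          · subst hj; simp [hs'']
          · simp [hs'', Function.update_of_ne hj]; exact hle j
        · intro j hj
          by_cases hja : j = a
          · subst hja; simp [hs'']
          · have : j ∉ insert a t := by simp [hja, hj]
            simp [hs'', Function.update_of_ne hja]; exact heq j this
  have hsub : FEA s' p ⊆ FEA s p := key Finset.univ s' hle (fun j hj => absurd (Finset.mem_univ j) hj)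
  -- W s' p ≤ W s p
  have hWle : W s' p ≤ W s p := by
    have hmem : W s' p ∈ {x : ℝ | ∃ o ∈ FEA s p, minUtil u o p = x} := by
      obtain ⟨o, ho, hval⟩ := (hW s' p).1
      exact ⟨o, hsub ho, hval⟩
    exact (hW s p).2 hmem
  rw [(hM s' p).2 i, (hM s p).2 i]
  exact hWle
end

section
/- For each input (s,p) let FEA_IR(s,p) = {o ∈ FEA(s,p) : u_j(o,p) ≥ r_j(p) for all j} and suppose FEA_IR(s,p) is nonempty and W(s,p) := max_{o∈FEA_IR(s,p)} min_{j∈N} u_j(o,p) is attained. Suppose FEA is resource monotone and M is a mechanism such that for every input (s,p), M(s,p) ∈ FEA(s,p) and u_i(M(s,p),p) = max(r_i(p), W(s,p)) for every agent i. Then M is strategy-proof, M is individually rational, and min_{i∈N} u_i(M(s,p),p) = W(s,p) for every input (s,p). -/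
/-- The individually rational part of the feasible set:
`FEA_IR(s,p) = {o ∈ FEA(s,p) | u_j(o,p) ≥ r_j(p) for all j}`. -/
def FEAIR {n : ℕ} {S : Fin n → Type*} {P O : Type*}
    (FEA : (∀ i, S i) → P → Set O) (u : Fin n → O → P → ℝ) (r : Fin n → P → ℝ)
    (s : ∀ i, S i) (p : P) : Set O :=
  {o ∈ FEA s p | ∀ j : Fin n, r j p ≤ u j o p}

/-- Suppose `FEA_IR(s,p)` is always nonempty, the value
`W(s,p) = max_{o ∈ FEA_IR(s,p)} min_j u_j(o,p)` is attained, `FEA` is resource monotone,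
and `M` is a mechanism that always outputs a feasible outcome giving every agent `i`
utility exactly `max(r_i(p), W(s,p))`. Then `M` is strategy-proof, individually rational,
and its minimum utility equals `W(s,p)` on every input. -/
theorem maxmin_subject_to_IR_strategyproof
    (n : ℕ) [NeZero n]
    (S : Fin n → Type*) [∀ i, PartialOrder (S i)]
    (P O : Type*)
    (FEA : (∀ i, S i) → P → Set O)
    (u : Fin n → O → P → ℝ)
    (r : Fin n → P → ℝ)
    -- FEA_IR is nonempty
    (hne : ∀ (s : ∀ i, S i) (p : P), (FEAIR FEA u r s p).Nonempty)
    -- the constrained maxmin value W(s,p), attained over FEA_IR(s,p)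
    (W : (∀ i, S i) → P → ℝ)
    (hW : ∀ (s : ∀ i, S i) (p : P),
      IsGreatest {x : ℝ | ∃ o ∈ FEAIR FEA u r s p, minUtil u o p = x} (W s p))
    -- resource monotonicity
    (hmono : ∀ (s : ∀ i, S i) (p : P) (i : Fin n) (s'i : S i), s'i ≤ s i →
      FEA (Function.update s i s'i) p ⊆ FEA s p)
    -- the mechanism: feasible, and every agent i gets utility max(r_i(p), W(s,p))
    (M : (∀ i, S i) → P → O)
    (hM : ∀ (s : ∀ i, S i) (p : P),
      M s p ∈ FEA s p ∧ ∀ i : Fin n, u i (M s p) p = max (r i p) (W s p)) :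
    -- strategy-proofness
    (∀ (s : ∀ i, S i) (p : P) (i : Fin n) (s'i : S i), s'i ≤ s i →
      u i (M (Function.update s i s'i) p) p ≤ u i (M s p) p) ∧
    -- individual rationality
    (∀ (s : ∀ i, S i) (p : P) (i : Fin n), r i p ≤ u i (M s p) p) ∧
    -- the minimum utility equals W
    (∀ (s : ∀ i, S i) (p : P), minUtil u (M s p) p = W s p) := by
  -- W is monotone under lowering one agent's type
  have hWmono : ∀ (s : ∀ i, S i) (p : P) (i : Fin n) (s'i : S i), s'i ≤ s i →
      W (Function.update s i s'i) p ≤ W s p := by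
    intro s p i s'i hle
    obtain ⟨⟨o, ho, hoW⟩, _⟩ := hW (Function.update s i s'i) p
    have ho' : o ∈ FEAIR FEA u r s p :=
      ⟨hmono s p i s'i hle ho.1, ho.2⟩
    exact (hW s p).2 ⟨o, ho', hoW⟩
  -- there is an agent with r_i ≤ W
  have hrW : ∀ (s : ∀ i, S i) (p : P), ∃ i : Fin n, r i p ≤ W s p := by
    intro s p
    obtain ⟨⟨o, ho, hoW⟩, _⟩ := hW s p
    obtain ⟨i, _, hi⟩ := Finset.exists_mem_eq_inf' (Finset.univ_nonempty)
      (fun i => u i o p)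
    refine ⟨i, ?_⟩
    calc r i p ≤ u i o p := ho.2 i
    _ = W s p := by rw [← hoW, minUtil, hi]
  refine ⟨?_, ?_, ?_⟩
  · intro s p i s'i hle
    rw [(hM s p).2 i, (hM (Function.update s i s'i) p).2 i]
    exact max_le_max le_rfl (hWmono s p i s'i hle)
  · intro s p i
    rw [(hM s p).2 i]
    exact le_max_left _ _
  · intro s p
    obtain ⟨i, hi⟩ := hrW s p
    apply le_antisymm
    · refine le_trans (Finset.inf'_le _ (Finset.mem_univ i)) ?_
      rw [(hM s p).2 i, max_eq_right hi]
    · apply Finset.le_inf'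
      intro j _
      rw [(hM s p).2 j]
      exact le_max_right _ _
end

section
/- Suppose each type set S_i = ℝ (with the usual order), the feasibility map FEA is resource monotone, the utility functions are monotone, and A is an algorithm such that for every input (s,p): A(s,p) ∈ FEA(s,p), A(s,p) is serially optimal over FEA(s,p) (the profile (u_1(A(s,p),p),…,u_n(A(s,p),p)) is lexicographically largest among profiles of outcomes in FEA(s,p)), u_i(A(s,p),p) ≥ r_i(p) for every i, and for every agent i the function s_i ↦ u_i(A(s_1,…,s_i,…,s_n,p),p) is continuous. Then A itself is a strategy-proof mechanism: for every input (s,p), every agent i and every s'_i ≤ s_i, u_i(A(s_1,…,s_i,…,s_n,p),p) ≥ u_i(A(s_1,…,s'_i,…,s_n,p),p). -/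
/-- An outcome `o` (feasible for `(s,p)`) is serially optimal: its utility profile is
lexicographically largest among the utility profiles of feasible outcomes. -/
def SeriallyOptimal {n : ℕ} {O P : Type*}
    (FEA : (Fin n → ℝ) → P → Set O) (u : Fin n → O → P → ℝ)
    (s : Fin n → ℝ) (p : P) (o : O) : Prop :=
  ∀ o' ∈ FEA s p,
    (∀ k : Fin n, u k o' p = u k o p) ∨
    ∃ j : Fin n, (∀ k : Fin n, k < j → u k o p = u k o' p) ∧ u j o p > u j o' p

/-- The utility functions are monotone: whenever an outcome is feasible and agent `i`'s
utility exceeds her outside option by at least `δ > 0`, for all sufficiently small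
reductions `ε'` of `s_i` there is a feasible outcome keeping everyone else's utility
unchanged and losing agent `i` at most `δ`. -/
def MonotoneUtilities {n : ℕ} {O P : Type*}
    (FEA : (Fin n → ℝ) → P → Set O) (u : Fin n → O → P → ℝ)
    (r : Fin n → P → ℝ) : Prop :=
  ∀ (i : Fin n) (s : Fin n → ℝ) (p : P), ∀ o ∈ FEA s p,
    ∀ δ : ℝ, 0 < δ → δ ≤ u i o p - r i p →
      ∃ ε > (0 : ℝ), ∀ ε' : ℝ, 0 < ε' → ε' < ε →
        ∃ o' ∈ FEA (Function.update s i (s i - ε')) p,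
          (∀ j : Fin n, j ≠ i → u j o' p = u j o p) ∧ u i o p - δ ≤ u i o' p

/-- If the type sets are `ℝ`, the feasibility map is resource monotone,
the utility functions are monotone, and `A` always outputs a feasible, serially optimal,
individually rational outcome with each agent's utility continuous in her own report,
then `A` itself is a strategy-proof mechanism. -/
theorem serial_optimization_strategyproof
    (n : ℕ) (P O : Type*)
    (FEA : (Fin n → ℝ) → P → Set O)
    (u : Fin n → O → P → ℝ)
    (r : Fin n → P → ℝ)
    -- resource monotonicity
    (hmono : ∀ (s : Fin n → ℝ) (p : P) (i : Fin n) (s'i : ℝ), s'i ≤ s i →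
      FEA (Function.update s i s'i) p ⊆ FEA s p)
    -- monotone utility functions
    (hu : MonotoneUtilities FEA u r)
    -- the algorithm: feasible, serially optimal, individually rational
    (A : (Fin n → ℝ) → P → O)
    (hA : ∀ (s : Fin n → ℝ) (p : P),
      A s p ∈ FEA s p ∧ SeriallyOptimal FEA u s p (A s p) ∧
      ∀ i : Fin n, r i p ≤ u i (A s p) p)
    -- each agent's utility under A is a continuous function of her own report
    (hAcont : ∀ (s : Fin n → ℝ) (p : P) (i : Fin n),
      Continuous fun t : ℝ => u i (A (Function.update s i t) p) p) :
    -- strategy-proofness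
    ∀ (s : Fin n → ℝ) (p : P) (i : Fin n) (s'i : ℝ), s'i ≤ s i →
      u i (A (Function.update s i s'i) p) p ≤ u i (A s p) p := by
  intro s p i s'i hle
  set f : ℝ → ℝ := fun t => u i (A (Function.update s i t) p) p with hf
  have hfc : Continuous f := hAcont s p i
  -- Key lemma: reducing the report a little cannot increase agent i's utility,
  -- provided her utility strictly exceeds the outside option.
  have key : ∀ x : ℝ, r i p < f x →
      ∃ ε > (0 : ℝ), ∀ ε' : ℝ, 0 < ε' → ε' < ε → f (x - ε') ≤ f x := by
    intro x hrx
    set su := Function.update s i x with hsu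
    obtain ⟨hfeas, hso, _⟩ := hA su p
    have hfx : f x = u i (A su p) p := rfl
    obtain ⟨ε, hεpos, H⟩ := hu i su p (A su p) hfeas (u i (A su p) p - r i p)
      (by rw [hfx] at hrx; linarith) le_rfl
    refine ⟨ε, hεpos, ?_⟩
    intro ε' hε'0 hε'ε
    obtain ⟨o', ho'feas, ho'eq, _⟩ := H ε' hε'0 hε'ε
    have hsux : su i = x := Function.update_self ..
    have hupd : Function.update su i (su i - ε') = Function.update s i (x - ε') := by
      rw [hsux, hsu, Function.update_idem]
    set sv := Function.update s i (x - ε') with hsv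
    rw [hupd] at ho'feas
    obtain ⟨hfeas', hso', _⟩ := hA sv p
    have hovfeas : A sv p ∈ FEA su p := by
      have hsub := hmono su p i (x - ε') (by rw [hsux]; linarith)
      have hupd2 : Function.update su i (x - ε') = sv := by
        rw [hsu, Function.update_idem]
      rw [hupd2] at hsub
      exact hsub hfeas'
    have hfxe : f (x - ε') = u i (A sv p) p := rfl
    rw [hfx, hfxe]
    by_contra hcon
    push_neg at hcon
    rcases hso (A sv p) hovfeas with h1 | ⟨j, hjlt, hjgt⟩
    · exact absurd (h1 i).symm (ne_of_lt hcon)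
    · have hji : j < i := by
        rcases lt_trichotomy j i with h | h | h
        · exact h
        · subst h; exact absurd hjgt (not_lt.mpr hcon.le)
        · exact absurd (hjlt i h) (ne_of_lt hcon)
      rcases hso' o' ho'feas with h2 | ⟨j', hj'lt, hj'gt⟩
      · have e1 := h2 j
        have e2 := ho'eq j (ne_of_lt hji)
        linarith
      · rcases lt_trichotomy j' j with h | h | h
        · have e1 := hjlt j' h
          have e2 := ho'eq j' (ne_of_lt (h.trans hji))
          linarith
        · subst h
          have e2 := ho'eq j' (ne_of_lt hji)
          linarith
        · have e1 := hj'lt j h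
          have e2 := ho'eq j (ne_of_lt hji)
          linarith
  -- main argument
  have hgoal : f s'i ≤ f (s i) := by
    by_contra hgt
    push_neg at hgt
    have hrle : r i p ≤ f (s i) := by
      have := (hA s p).2.2 i
      have hself : Function.update s i (s i) = s := Function.update_eq_self i s
      simp only [hf, hself]
      exact this
    set v : ℝ := (f (s i) + f s'i) / 2 with hv
    have hv1 : f (s i) < v := by rw [hv]; linarith
    have hv2 : v < f s'i := by rw [hv]; linarith
    set X : Set ℝ := Set.Icc s'i (s i) ∩ {y | f y ≤ v} with hX
    have hXcl : IsClosed X := isClosed_Icc.inter (isClosed_le hfc continuous_const)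
    have hXne : X.Nonempty := ⟨s i, ⟨hle, le_rfl⟩, hv1.le⟩
    have hXbdd : BddBelow X := ⟨s'i, fun y hy => hy.1.1⟩
    set x := sInf X with hx
    have hxX : x ∈ X := hXcl.csInf_mem hXne hXbdd
    obtain ⟨⟨hx1, hx2⟩, hx3⟩ := hxX
    have hlow : ∀ y, s'i ≤ y → y < x → v < f y := by
      intro y hy1 hy2
      by_contra hyc
      push_neg at hyc
      have : y ∈ X := ⟨⟨hy1, le_trans hy2.le hx2⟩, hyc⟩
      exact absurd (csInf_le hXbdd this) (not_le.mpr hy2)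
    have hxne : s'i < x := by
      rcases lt_or_eq_of_le hx1 with h | h
      · exact h
      · exact absurd hx3 (not_le.mpr (h ▸ hv2))
    -- f x ≥ v by continuity from the left
    have hvx : v ≤ f x := by
      by_contra hvc
      push_neg at hvc
      have hopen : IsOpen (f ⁻¹' Set.Iio v) := (isOpen_Iio).preimage hfc
      obtain ⟨η, hη, hball⟩ := Metric.isOpen_iff.mp hopen x hvc
      set y := max s'i (x - η / 2) with hy
      have hy1 : s'i ≤ y := le_max_left _ _
      have hy2 : y < x := by
        apply max_lt hxne
        linarith
      have hymem : y ∈ Metric.ball x η := by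
        rw [Metric.mem_ball, Real.dist_eq, abs_lt]
        constructor
        · have : x - η / 2 ≤ y := le_max_right _ _
          linarith
        · linarith
      have := hball hymem
      exact absurd (hlow y hy1 hy2) (not_lt.mpr (le_of_lt this))
    obtain ⟨ε, hεpos, hkey⟩ := key x (lt_of_le_of_lt hrle (lt_of_lt_of_le hv1 hvx))
    set ε' := min (ε / 2) ((x - s'i) / 2) with hε'
    have hε'0 : 0 < ε' := lt_min (by linarith) (by linarith)
    have hε'ε : ε' < ε := lt_of_le_of_lt (min_le_left _ _) (by linarith)
    have h1 : f (x - ε') ≤ f x := hkey ε' hε'0 hε'ε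
    have h2 : v < f (x - ε') := by
      apply hlow
      · have : ε' ≤ (x - s'i) / 2 := min_le_right _ _
        linarith
      · linarith
    have hfxv : f x ≤ v := hx3
    linarith
  have hself : Function.update s i (s i) = s := Function.update_eq_self i s
  have : f s'i ≤ u i (A (Function.update s i (s i)) p) p := hgoal
  rwa [hself] at this
end

section
/- Let a < b be reals and g : [a,b] → ℝ be continuous with g(x) ≥ 0 for all x ∈ [a,b]. Suppose (i) for every x ∈ [a,b) with g(x) > 0 there exists δ > 0 such that g(x') ≤ g(x) for every x' ∈ [x, min(x+δ, b)], and (ii) for all x, y ∈ [a,b] with x ≤ y, g(x) = 0 implies g(y) = 0. Then g is monotonically non-increasing on [a,b]: for all x, y ∈ [a,b] with x ≤ y, g(y) ≤ g(x). -/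
open Set Filter Topology

/-- Continuous induction on `[x, b]` applied to the sublevel set `{t | f t ≤ f x}`, which is
relatively closed by continuity and open to the right by the local hypothesis. -/
theorem ContinuousOn.antitoneOn_of_eventually_nhdsGT_le {α β : Type*}
    [ConditionallyCompleteLinearOrder α] [TopologicalSpace α] [OrderTopology α]
    [DenselyOrdered α] [LinearOrder β] [TopologicalSpace β] [OrderClosedTopology β]
    {f : α → β} {a b : α} (hf : ContinuousOn f (Icc a b))
    (hloc : ∀ x ∈ Ico a b, ∀ᶠ y in 𝓝[>] x, f y ≤ f x) :
    AntitoneOn f (Icc a b) := by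
  intro x hx y hy hxy
  have hclosed : IsClosed ({t | f t ≤ f x} ∩ Icc x b) := by
    rw [inter_comm]
    exact (hf.mono (Icc_subset_Icc_left hx.1)).preimage_isClosed_of_isClosed isClosed_Icc
      isClosed_Iic
  have hsub : Icc x b ⊆ {t | f t ≤ f x} :=
    hclosed.Icc_subset_of_forall_mem_nhdsWithin le_rfl fun t ht =>
      (hloc t ⟨hx.1.trans ht.2.1, ht.2.2⟩).mono fun _ hle => hle.trans ht.1
  exact hsub ⟨hxy, hy.2⟩

theorem locally_nonincreasing_implies_nonincreasing_general
    (a b : ℝ) (g : ℝ → ℝ)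
    (hg : ContinuousOn g (Set.Icc a b))
    (hnonneg : ∀ x ∈ Set.Icc a b, 0 ≤ g x)
    -- (i) locally non-increasing to the right wherever positive
    (hloc : ∀ x ∈ Set.Ico a b, 0 < g x →
      ∃ δ > (0 : ℝ), ∀ x' ∈ Set.Icc x (min (x + δ) b), g x' ≤ g x)
    -- (ii) the zero set is upward closed
    (hzero : ∀ x ∈ Set.Icc a b, ∀ y ∈ Set.Icc a b, x ≤ y → g x = 0 → g y = 0) :
    ∀ x ∈ Set.Icc a b, ∀ y ∈ Set.Icc a b, x ≤ y → g y ≤ g x := by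
  have hstep : ∀ x ∈ Ico a b, ∀ᶠ y in 𝓝[>] x, g y ≤ g x := by
    intro x hx
    rcases (hnonneg x (Ico_subset_Icc_self hx)).eq_or_lt with hgx | hgx
    · filter_upwards [Ioc_mem_nhdsGT hx.2] with y hy
      rw [hzero x (Ico_subset_Icc_self hx) y ⟨hx.1.trans hy.1.le, hy.2⟩ hy.1.le hgx.symm, hgx]
    · obtain ⟨δ, hδ, hle⟩ := hloc x hx hgx
      filter_upwards [Ioc_mem_nhdsGT (lt_min (lt_add_of_pos_right x hδ) hx.2)] with y hy
      exact hle y (Ioc_subset_Icc_self hy)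
  exact fun x hx y hy hxy => hg.antitoneOn_of_eventually_nhdsGT_le hstep hx hy hxy

/-- A continuous nonnegative function on `[a,b]` that is locally
non-increasing to the right wherever it is positive, and whose zero set is upward
closed, is globally non-increasing on `[a,b]`. -/
theorem locally_nonincreasing_implies_nonincreasing
    (a b : ℝ) (hab : a < b) (g : ℝ → ℝ)
    (hg : ContinuousOn g (Set.Icc a b))
    (hnonneg : ∀ x ∈ Set.Icc a b, 0 ≤ g x)
    -- (i) locally non-increasing to the right wherever positive
    (hloc : ∀ x ∈ Set.Ico a b, 0 < g x →
      ∃ δ > (0 : ℝ), ∀ x' ∈ Set.Icc x (min (x + δ) b), g x' ≤ g x)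
    -- (ii) the zero set is upward closed
    (hzero : ∀ x ∈ Set.Icc a b, ∀ y ∈ Set.Icc a b, x ≤ y → g x = 0 → g y = 0) :
    ∀ x ∈ Set.Icc a b, ∀ y ∈ Set.Icc a b, x ≤ y → g y ≤ g x :=
  locally_nonincreasing_implies_nonincreasing_general a b g hg hnonneg hloc hzero
end

section
/- Let l_1,…,l_n > 0 be weights. Suppose each type set S_i = ℝ, the feasibility map FEA is resource monotone, the utility functions are monotone, and A is an algorithm such that for every input (s,p): letting q = q(s) be the permutation of agents ordering them by non-increasing l_i s_i (ties broken by agent index), A(s,p) ∈ FEA(s,p), the reordered utility profile (u_{q_1}(A(s,p),p),…,u_{q_n}(A(s,p),p)) is lexicographically largest among reordered profiles of outcomes in FEA(s,p), u_i(A(s,p),p) ≥ r_i(p) for every i, and each function s_i ↦ u_i(A(s_1,…,s_i,…,s_n,p),p) is continuous. Then A is individually rational, strategy-proof (for every s'_i ≤ s_i, u_i(A(s_1,…,s_i,…,s_n,p),p) ≥ u_i(A(s_1,…,s'_i,…,s_n,p),p)), and order envy-free with respect to {l_i}: whenever l_i s_i > l_j s_j, agent i precedes agent j in the ordering q(s)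 used for serial optimization. -/
/-- The permutation `q` orders the agents by non-increasing weighted contribution
`l_i * s_i`, with ties broken by agent index. -/
def SortsByContribution {n : ℕ} (l : Fin n → ℝ) (s : Fin n → ℝ)
    (q : Equiv.Perm (Fin n)) : Prop :=
  ∀ k k' : Fin n, k < k' →
    l (q k) * s (q k) > l (q k') * s (q k') ∨
    (l (q k) * s (q k) = l (q k') * s (q k') ∧ q k < q k')

/-- An outcome `o` (feasible for `(s,p)`) serially optimizes in the order given by the
permutation `q`: the reordered utility profile `(u_{q 0}(o,p), …, u_{q (n-1)}(o,p))` is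
lexicographically largest among the reordered profiles of feasible outcomes. -/
def SeriallyOptimalInOrder {n : ℕ} {O P : Type*}
    (FEA : (Fin n → ℝ) → P → Set O) (u : Fin n → O → P → ℝ)
    (q : Equiv.Perm (Fin n)) (s : Fin n → ℝ) (p : P) (o : O) : Prop :=
  ∀ o' ∈ FEA s p,
    (∀ k : Fin n, u (q k) o' p = u (q k) o p) ∨
    ∃ j : Fin n, (∀ k : Fin n, k < j → u (q k) o p = u (q k) o' p) ∧
      u (q j) o p > u (q j) o' p

lemma sorts_lt {n : ℕ} {l s : Fin n → ℝ} {q : Equiv.Perm (Fin n)}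
    (hq : SortsByContribution l s q) {a b : Fin n}
    (hab : l a * s a > l b * s b ∨ (l a * s a = l b * s b ∧ a < b)) :
    q.symm a < q.symm b := by
  rcases lt_trichotomy (q.symm a) (q.symm b) with h | h | h
  · exact h
  · have hab' : a = b := by
      have := congrArg q h
      simpa using this
    subst hab'
    rcases hab with h1 | ⟨h1, h2⟩
    · exact absurd h1 (lt_irrefl _)
    · exact absurd h2 (lt_irrefl _)
  · have h3 := hq _ _ h
    simp only [Equiv.apply_symm_apply] at h3
    rcases hab with h1 | ⟨h1, h2⟩ <;> rcases h3 with h3 | ⟨h3, h4⟩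
    · linarith
    · linarith
    · linarith
    · exact absurd (h2.trans h4) (lt_irrefl _)

lemma sorts_unique {n : ℕ} {l : Fin n → ℝ} {s1 s2 : Fin n → ℝ}
    {q1 q2 : Equiv.Perm (Fin n)}
    (hq1 : SortsByContribution l s1 q1) (hq2 : SortsByContribution l s2 q2)
    (h : ∀ a b : Fin n,
      (l a * s1 a > l b * s1 b ∨ (l a * s1 a = l b * s1 b ∧ a < b)) →
      (l a * s2 a > l b * s2 b ∨ (l a * s2 a = l b * s2 b ∧ a < b))) :
    q1 = q2 := by
  have hmono : StrictMono (fun k => q2.symm (q1 k)) := by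
    intro k k' hk
    exact sorts_lt hq2 (h _ _ (hq1 k k' hk))
  have hrange : Set.range (fun k => q2.symm (q1 k)) = Set.range (id : Fin n → Fin n) := by
    rw [Set.range_id]
    exact ((q1.trans q2.symm).surjective).range_eq
  have inst : WellFoundedLT (Fin n) := inferInstance
  have hid : (fun k => q2.symm (q1 k)) = (id : Fin n → Fin n) :=
    (@StrictMono.range_inj (Fin n) (Fin n) _ _ inst _ _ hmono
      (strictMono_id : StrictMono (id : Fin n → Fin n))).1 hrange
  refine Equiv.ext fun k => ?_
  have hk := congrFun hid k
  simp only [id] at hk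
  calc q1 k = q2 (q2.symm (q1 k)) := (q2.apply_symm_apply _).symm
    _ = q2 k := by rw [hk]

lemma perm_const {n : ℕ} {l s : Fin n → ℝ} (hl : ∀ a, 0 < l a) {i : Fin n}
    {x y : ℝ} (hfree : ∀ a, a ≠ i → ∀ τ ∈ Set.Icc x y, l a * s a ≠ l i * τ)
    {τ1 τ2 : ℝ} (h1 : τ1 ∈ Set.Icc x y) (h2 : τ2 ∈ Set.Icc x y)
    {q1 q2 : Equiv.Perm (Fin n)}
    (hq1 : SortsByContribution l (Function.update s i τ1) q1)
    (hq2 : SortsByContribution l (Function.update s i τ2) q2) :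
    q1 = q2 := by
  apply sorts_unique hq1 hq2
  intro a b hab
  by_cases ha : a = i <;> by_cases hb : b = i
  · subst ha; subst hb
    simp only [Function.update_self] at hab
    rcases hab with h' | ⟨_, h'⟩ <;> exact absurd h' (lt_irrefl _)
  · subst ha
    simp only [Function.update_self, Function.update_of_ne hb] at hab ⊢
    rcases hab with h' | ⟨h', _⟩
    · left
      by_contra hc
      push_neg at hc
      have heq : l b * s b = l a * (l b * s b / l a) := by
        rw [mul_div_cancel₀ _ (ne_of_gt (hl a))]
      have hle1 : τ2 ≤ l b * s b / l a := by
        rw [le_div_iff₀ (hl a)]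
        linarith
      have hle2 : l b * s b / l a ≤ τ1 := by
        rw [div_le_iff₀ (hl a)]
        linarith
      exact hfree b hb _ ⟨le_trans h2.1 hle1, le_trans hle2 h1.2⟩ heq
    · exact absurd h'.symm (hfree b hb τ1 h1)
  · subst hb
    simp only [Function.update_self, Function.update_of_ne ha] at hab ⊢
    rcases hab with h' | ⟨h', _⟩
    · left
      by_contra hc
      push_neg at hc
      have heq : l a * s a = l b * (l a * s a / l b) := by
        rw [mul_div_cancel₀ _ (ne_of_gt (hl b))]
      have hle1 : τ1 ≤ l a * s a / l b := by
        rw [le_div_iff₀ (hl b)]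
        linarith
      have hle2 : l a * s a / l b ≤ τ2 := by
        rw [div_le_iff₀ (hl b)]
        linarith
      exact hfree a ha _ ⟨le_trans h1.1 hle1, le_trans hle2 h2.2⟩ heq
    · exact absurd h' (hfree a ha τ1 h1)
  · simpa only [Function.update_of_ne ha, Function.update_of_ne hb] using hab

lemma exists_good_interval (g : ℝ → ℝ) (hg : Continuous g) (T : Set ℝ) (hT : T.Finite) :
    ∀ x y : ℝ, x ≤ y → g y < g x →
      ∃ x' y' : ℝ, x' < y' ∧ (∀ τ ∈ Set.Icc x' y', τ ∉ T) ∧ g y' < g x' := by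
  suffices H : ∀ N : ℕ, ∀ x y : ℝ, x ≤ y → g y < g x → (T ∩ Set.Ioo x y).ncard ≤ N →
      ∃ x' y' : ℝ, x' < y' ∧ (∀ τ ∈ Set.Icc x' y', τ ∉ T) ∧ g y' < g x' by
    intro x y h1 h2
    exact H _ x y h1 h2 le_rfl
  intro N
  induction N with
  | zero =>
    intro x y hxy hgxy hcard
    have hfin : (T ∩ Set.Ioo x y).Finite := hT.subset Set.inter_subset_left
    have hempty : T ∩ Set.Ioo x y = ∅ := by
      rw [← Set.ncard_eq_zero hfin]
      omega
    have hxy' : x < y := lt_of_le_of_ne hxy (by rintro rfl; exact absurd hgxy (lt_irrefl _))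
    obtain ⟨d, hd⟩ : ∃ d : ℝ, d = (g x - g y) / 2 := ⟨_, rfl⟩
    have hdpos : 0 < d := by linarith
    obtain ⟨δ1, hδ1, hδ1'⟩ := Metric.continuous_iff.mp hg x d hdpos
    obtain ⟨δ2, hδ2, hδ2'⟩ := Metric.continuous_iff.mp hg y d hdpos
    obtain ⟨m1, hm1⟩ : ∃ m : ℝ, m = min (δ1 / 2) ((y - x) / 3) := ⟨_, rfl⟩
    obtain ⟨m2, hm2⟩ : ∃ m : ℝ, m = min (δ2 / 2) ((y - x) / 3) := ⟨_, rfl⟩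
    have hm1a : m1 ≤ δ1 / 2 := hm1 ▸ min_le_left _ _
    have hm1b : m1 ≤ (y - x) / 3 := hm1 ▸ min_le_right _ _
    have hm2a : m2 ≤ δ2 / 2 := hm2 ▸ min_le_left _ _
    have hm2b : m2 ≤ (y - x) / 3 := hm2 ▸ min_le_right _ _
    have hm1pos : 0 < m1 := hm1 ▸ lt_min (by linarith) (by linarith)
    have hm2pos : 0 < m2 := hm2 ▸ lt_min (by linarith) (by linarith)
    refine ⟨x + m1, y - m2, by linarith, ?_, ?_⟩
    · intro τ hτ hτT
      have hx' : x < τ := lt_of_lt_of_le (by linarith) hτ.1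
      have hy' : τ < y := lt_of_le_of_lt hτ.2 (by linarith)
      have hmem : τ ∈ T ∩ Set.Ioo x y := ⟨hτT, hx', hy'⟩
      rw [hempty] at hmem
      exact hmem
    · have e1 : dist (x + m1) x < δ1 := by
        rw [Real.dist_eq, abs_of_nonneg (by linarith)]
        linarith
      have e2 : dist (y - m2) y < δ2 := by
        rw [Real.dist_eq, abs_of_nonpos (by linarith)]
        linarith
      have f1 := hδ1' _ e1
      have f2 := hδ2' _ e2
      rw [Real.dist_eq, abs_lt] at f1 f2
      obtain ⟨f1a, f1b⟩ := f1
      obtain ⟨f2a, f2b⟩ := f2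
      linarith
  | succ N ih =>
    intro x y hxy hgxy hcard
    rcases Set.eq_empty_or_nonempty (T ∩ Set.Ioo x y) with hempty | ⟨θ, hθT, hθI⟩
    · exact ih x y hxy hgxy (by rw [hempty]; simp)
    · have hfin : (T ∩ Set.Ioo x y).Finite := hT.subset Set.inter_subset_left
      rcases lt_or_ge (g θ) (g x) with hcase | hcase
      · refine ih x θ hθI.1.le hcase ?_
        have hss : T ∩ Set.Ioo x θ ⊂ T ∩ Set.Ioo x y := by
          constructor
          · intro τ hτ
            exact ⟨hτ.1, hτ.2.1, hτ.2.2.trans hθI.2⟩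
          · intro hsub
            have := hsub ⟨hθT, hθI⟩
            exact absurd this.2.2 (lt_irrefl _)
        have := Set.ncard_lt_ncard hss hfin
        omega
      · refine ih θ y hθI.2.le (lt_of_lt_of_le hgxy hcase) ?_
        have hss : T ∩ Set.Ioo θ y ⊂ T ∩ Set.Ioo x y := by
          constructor
          · intro τ hτ
            exact ⟨hτ.1, hθI.1.trans hτ.2.1, hτ.2.2⟩
          · intro hsub
            have := hsub ⟨hθT, hθI⟩
            exact absurd this.2.1 (lt_irrefl _)
        have := Set.ncard_lt_ncard hss hfin
        omega


/-- With positive weights `l_i`, type sets `ℝ`, a resource monotone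
feasibility map and monotone utilities, suppose the algorithm `A`, on each input,
serially optimizes the utilities in the order `q(s)` that sorts agents by non-increasing
`l_i * s_i` (ties broken by index), outputs feasible individually rational outcomes, and
each agent's utility under `A` is continuous in her own report.  Then `A` is individually
rational, strategy-proof, and order envy-free with respect to the weights: whenever
`l_i * s_i > l_j * s_j`, agent `i` precedes agent `j` in the ordering `q(s)`. -/
theorem serial_optimization_by_contribution_IR_SP_OEF
    (n : ℕ) (P O : Type*)
    (FEA : (Fin n → ℝ) → P → Set O)
    (u : Fin n → O → P → ℝ)
    (r : Fin n → P → ℝ)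
    (l : Fin n → ℝ)
    (hl : ∀ i, 0 < l i)
    -- resource monotonicity
    (hmono : ∀ (s : Fin n → ℝ) (p : P) (i : Fin n) (s'i : ℝ), s'i ≤ s i →
      FEA (Function.update s i s'i) p ⊆ FEA s p)
    -- monotone utility functions
    (hu : MonotoneUtilities FEA u r)
    -- the report-dependent ordering used by the algorithm
    (q : (Fin n → ℝ) → Equiv.Perm (Fin n))
    (hq : ∀ s : Fin n → ℝ, SortsByContribution l s (q s))
    -- the algorithm: feasible, serially optimal in the order q(s), individually rational
    (A : (Fin n → ℝ) → P → O)
    (hA : ∀ (s : Fin n → ℝ) (p : P),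
      A s p ∈ FEA s p ∧ SeriallyOptimalInOrder FEA u (q s) s p (A s p) ∧
      ∀ i : Fin n, r i p ≤ u i (A s p) p)
    -- each agent's utility under A is a continuous function of her own report
    (hAcont : ∀ (s : Fin n → ℝ) (p : P) (i : Fin n),
      Continuous fun t : ℝ => u i (A (Function.update s i t) p) p) :
    -- individual rationality
    (∀ (s : Fin n → ℝ) (p : P) (i : Fin n), r i p ≤ u i (A s p) p) ∧
    -- strategy-proofness
    (∀ (s : Fin n → ℝ) (p : P) (i : Fin n) (s'i : ℝ), s'i ≤ s i →
      u i (A (Function.update s i s'i) p) p ≤ u i (A s p) p) ∧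
    -- order envy-freeness with respect to the weights l
    (∀ (s : Fin n → ℝ) (i j : Fin n), l i * s i > l j * s j →
      (q s).symm i < (q s).symm j) := by
  refine ⟨fun s p i => (hA s p).2.2 i, ?_, fun s i j hij => sorts_lt (hq s) (Or.inl hij)⟩
  intro s p i t' ht'
  by_contra hcon
  push_neg at hcon
  classical
  set g : ℝ → ℝ := fun τ => u i (A (Function.update s i τ) p) p with hgdef
  have hgc : Continuous g := hAcont s p i
  have hgs : g (s i) = u i (A s p) p := by
    show u i (A (Function.update s i (s i)) p) p = u i (A s p) p
    rw [Function.update_eq_self]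
  -- thresholds
  have hTfin : {τ : ℝ | ∃ a : Fin n, a ≠ i ∧ l a * s a = l i * τ}.Finite := by
    have hsub : {τ : ℝ | ∃ a : Fin n, a ≠ i ∧ l a * s a = l i * τ} ⊆
        Set.range (fun a : Fin n => l a * s a / l i) := by
      rintro τ ⟨a, _, he⟩
      exact ⟨a, by rw [div_eq_iff (ne_of_gt (hl i)), he, mul_comm]⟩
    exact (Set.finite_range _).subset hsub
  obtain ⟨x, y, hxy, hfreeT, hgyx⟩ :=
    exists_good_interval g hgc _ hTfin t' (s i) ht' (by rw [hgs]; exact hcon)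
  have hfree : ∀ a, a ≠ i → ∀ τ ∈ Set.Icc x y, l a * s a ≠ l i * τ := by
    intro a ha τ hτ he
    exact hfreeT τ hτ ⟨a, ha, he⟩
  -- constant permutation on [x, y]
  have hQ : ∀ τ ∈ Set.Icc x y,
      q (Function.update s i τ) = q (Function.update s i x) := by
    intro τ hτ
    exact perm_const hl hfree hτ ⟨le_rfl, hxy.le⟩ (hq _) (hq _)
  set Q : Equiv.Perm (Fin n) := q (Function.update s i x) with hQdef
  set m : Fin n := Q.symm i with hmdef
  have hQm : Q m = i := Q.apply_symm_apply i
  have hQk : ∀ k : Fin n, k < m → Q k ≠ i := by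
    intro k hk hki
    have hkm : k = m := by rw [hmdef, ← hki, Equiv.symm_apply_apply]
    rw [hkm] at hk
    exact absurd hk (lt_irrefl _)
  -- the level v
  obtain ⟨v, hv⟩ : ∃ v : ℝ, v = (g x + g y) / 2 := ⟨_, rfl⟩
  have hvx : v < g x := by linarith
  have hvy : g y < v := by linarith
  have hry : r i p ≤ g y := (hA (Function.update s i y) p).2.2 i
  have hrv : r i p < v := lt_of_le_of_lt hry hvy
  -- the first crossing point z
  set W : Set ℝ := {τ : ℝ | τ ∈ Set.Icc x y ∧ g τ ≤ v} with hWdef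
  have hWne : W.Nonempty := ⟨y, ⟨⟨hxy.le, le_rfl⟩, hvy.le⟩⟩
  have hWbdd : BddBelow W := ⟨x, fun τ hτ => hτ.1.1⟩
  have hWclosed : IsClosed W := by
    have : W = Set.Icc x y ∩ {τ : ℝ | g τ ≤ v} := rfl
    rw [this]
    exact isClosed_Icc.inter (isClosed_le hgc continuous_const)
  set z : ℝ := sInf W with hzdef
  have hzW : z ∈ W := hWclosed.csInf_mem hWne hWbdd
  have hzy : z ≤ y := hzW.1.2
  have hzx : x ≤ z := hzW.1.1
  have hgz : g z ≤ v := hzW.2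
  have hxz : x < z := by
    rcases lt_or_eq_of_le hzx with h | h
    · exact h
    · exfalso; rw [← h] at hgz; linarith
  have hlow : ∀ τ : ℝ, x ≤ τ → τ < z → v < g τ := by
    intro τ h1 h2
    by_contra hc
    push_neg at hc
    have hτW : τ ∈ W := ⟨⟨h1, le_trans h2.le hzy⟩, hc⟩
    exact absurd (csInf_le hWbdd hτW) (not_le.2 h2)
  have hgzv : g z = v := by
    refine le_antisymm hgz ?_
    have htz : Filter.Tendsto g (nhdsWithin z (Set.Iio z)) (nhds (g z)) :=
      (hgc.tendsto z).mono_left nhdsWithin_le_nhds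
    refine ge_of_tendsto htz ?_
    filter_upwards [Ioo_mem_nhdsLT_of_mem ⟨hxz, le_rfl⟩] with τ hτ
    exact (hlow τ hτ.1.le hτ.2).le
  -- monotone utilities at z
  have hzIcc : z ∈ Set.Icc x y := hzW.1
  have hfeasz : A (Function.update s i z) p ∈ FEA (Function.update s i z) p :=
    (hA (Function.update s i z) p).1
  have hoptz : SeriallyOptimalInOrder FEA u Q (Function.update s i z) p
      (A (Function.update s i z) p) := by
    have h := (hA (Function.update s i z) p).2.1
    rwa [hQ z hzIcc] at h
  have huiz : u i (A (Function.update s i z) p) p = v := hgzv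
  obtain ⟨ε0, hε0, hMU⟩ := hu i (Function.update s i z) p _ hfeasz (v - r i p)
    (by linarith) (by rw [huiz])
  obtain ⟨ε', hε'⟩ : ∃ e : ℝ, e = min ε0 (z - x) / 2 := ⟨_, rfl⟩
  have hmin1 : min ε0 (z - x) ≤ ε0 := min_le_left _ _
  have hmin2 : min ε0 (z - x) ≤ z - x := min_le_right _ _
  have hminpos : 0 < min ε0 (z - x) := lt_min hε0 (by linarith)
  have hε'pos : 0 < ε' := by rw [hε']; linarith
  have hε'lt : ε' < ε0 := by rw [hε']; linarith
  obtain ⟨o', ho'feas, ho'others, ho'ui⟩ := hMU ε' hε'pos hε'lt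
  have hupd : Function.update (Function.update s i z) i
      (Function.update s i z i - ε') = Function.update s i (z - ε') := by
    rw [Function.update_self, Function.update_idem]
  rw [hupd] at ho'feas
  have hτ'x : x ≤ z - ε' := by rw [hε']; linarith
  have hτ'z : z - ε' < z := by linarith
  have hτ'Icc : z - ε' ∈ Set.Icc x y := ⟨hτ'x, by linarith⟩
  have hoptτ' : SeriallyOptimalInOrder FEA u Q (Function.update s i (z - ε')) p
      (A (Function.update s i (z - ε')) p) := by
    have h := (hA (Function.update s i (z - ε')) p).2.1
    rwa [hQ _ hτ'Icc] at h
  have hfeasτ' : A (Function.update s i (z - ε')) p ∈ FEA (Function.update s i (z - ε')) p :=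
    (hA (Function.update s i (z - ε')) p).1
  -- feasibility of A at τ' within FEA at z
  have hfeasup : A (Function.update s i (z - ε')) p ∈ FEA (Function.update s i z) p := by
    have hsub := hmono (Function.update s i z) p i (z - ε')
      (by rw [Function.update_self]; linarith)
    rw [Function.update_idem] at hsub
    exact hsub hfeasτ'
  -- E : predecessor utilities agree between A(τ') and A(z)
  have hE : ∀ k : Fin n, k < m →
      u (Q k) (A (Function.update s i (z - ε')) p) p
        = u (Q k) (A (Function.update s i z) p) p := by
    rcases hoptτ' o' ho'feas with hC | ⟨j', hpre', hgt'⟩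
    · intro k hk
      rw [← hC k]
      exact ho'others (Q k) (hQk k hk)
    · rcases lt_trichotomy j' m with hj | hj | hj
      · exfalso
        have hj'ne : Q j' ≠ i := hQk j' hj
        rw [ho'others (Q j') hj'ne] at hgt'
        have hpres : ∀ k : Fin n, k < j' →
            u (Q k) (A (Function.update s i (z - ε')) p) p
              = u (Q k) (A (Function.update s i z) p) p := by
          intro k hk
          rw [hpre' k hk]
          exact ho'others (Q k) (hQk k (hk.trans hj))
        rcases hoptz _ hfeasup with hD | ⟨μ, hpμ, hgμ⟩
        · have := hD j'
          linarith [hgt']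
        · rcases lt_trichotomy μ j' with hμ | hμ | hμ
          · have := hpres μ hμ
            linarith [hgμ]
          · rw [hμ] at hgμ
            linarith [hgt', hgμ]
          · have := hpμ j' hμ
            linarith [hgt']
      · intro k hk
        rw [hpre' k (by rw [hj]; exact hk)]
        exact ho'others (Q k) (hQk k hk)
      · intro k hk
        rw [hpre' k (hk.trans hj)]
        exact ho'others (Q k) (hQk k hk)
  -- final contradiction
  have hvτ' : v < g (z - ε') := hlow _ hτ'x hτ'z
  have hgτ' : g (z - ε') = u i (A (Function.update s i (z - ε')) p) p := rfl
  rcases hoptz _ hfeasup with hD | ⟨μ, hpμ, hgμ⟩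
  · have hDm := hD m
    rw [hQm] at hDm
    rw [hgτ', hDm] at hvτ'
    linarith [huiz]
  · rcases lt_trichotomy μ m with hμ | hμ | hμ
    · have := hE μ hμ
      linarith [hgμ]
    · rw [hμ, hQm] at hgμ
      rw [hgτ'] at hvτ'
      linarith [huiz]
    · have hpm := hpμ m hμ
      rw [hQm] at hpm
      rw [hgτ', ← hpm] at hvτ'
      linarith [huiz]
end

section
/- In the network route allocation model: (a) the environment is resource monotone: if v'_i ≤ v_i for every user i, then every solution feasible under capacities (v'_1,…,v'_n) is feasible under (v_1,…,v_n); and (b) the environment is continuous: if (x, x_{·,·}, f) is a feasible solution under (v_1,…,v_n) and i is a user and x'_i is a real with b_{i,d_i} ≤ x'_i ≤ x_i, then there exists a feasible solution under (v_1,…,v_n) whose total flows are x'_i for user i and x_j for every user j ≠ i. -/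
/-- Feasibility of a solution `(x, xx, f)` of the network route allocation problem under
vertex capacities `v`.  Here `n` is the number of users, `m` the number of servers,
`E` the set of directed edges between users, `d i` the server hosting user `i`'s file,
`b i j` the capacity of the edge from user `i` to server `j`, `x i` user `i`'s total
flow, `xx i k` the flow user `i` receives through the edge from user `k` to server
`d i`, and `f i e` the flow of user `i`'s commodity on the graph edge `e`. -/
def Feasible (n m : ℕ) (E : Finset (Fin n × Fin n)) (d : Fin n → Fin m)
    (b : Fin n → Fin m → ℝ) (v : Fin n → ℝ)
    (x : Fin n → ℝ) (xx : Fin n → Fin n → ℝ) (f : Fin n → Fin n × Fin n → ℝ) : Prop :=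
  -- all variables are non-negative, and flows live on graph edges
  (∀ i, 0 ≤ x i) ∧
  (∀ i k, 0 ≤ xx i k) ∧
  (∀ i e, 0 ≤ f i e) ∧
  (∀ i e, e ∉ E → f i e = 0) ∧
  -- (1) total flow decomposition
  (∀ i, x i = ∑ k, xx i k) ∧
  -- (2) direct flow plus incoming flow
  (∀ i, x i = xx i i + ∑ e ∈ E.filter (fun e => e.2 = i), f i e) ∧
  -- (3) flow conservation
  (∀ i j, i ≠ j →
    ∑ e ∈ E.filter (fun e => e.1 = j), f i e
      = (∑ e ∈ E.filter (fun e => e.2 = j), f i e) + xx i j) ∧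
  -- (4) individual rationality
  (∀ i, b i (d i) ≤ x i) ∧
  -- (5) vertex capacity
  (∀ i, (∑ j, xx j i) + (∑ j, ∑ e ∈ E.filter (fun e => e.2 = i), f j e) ≤ v i) ∧
  -- (6) server-edge capacity
  (∀ (i : Fin n) (j : Fin m),
    ∑ k ∈ Finset.univ.filter (fun k => d k = j), xx k i ≤ b i j)

/-- The network route allocation environment is (a) resource monotone:
any solution feasible under capacities `v'` with `v' ≤ v` pointwise is feasible under
`v`; and (b) continuous: the total flow of any single user can be decreased to any value
that is still at least her direct-edge bandwidth, keeping everyone else's total flow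
unchanged. -/
theorem network_resource_monotone_and_continuous
    (n m : ℕ) (E : Finset (Fin n × Fin n)) (d : Fin n → Fin m)
    (b : Fin n → Fin m → ℝ) (c : Fin n → ℝ)
    (hb : ∀ i j, 0 ≤ b i j) (hc : ∀ i, 0 < c i) :
    -- (a) resource monotonicity
    (∀ (v v' : Fin n → ℝ) (x : Fin n → ℝ) (xx : Fin n → Fin n → ℝ)
        (f : Fin n → Fin n × Fin n → ℝ),
      (∀ i, 0 ≤ v' i) → (∀ i, v' i ≤ v i) →
      Feasible n m E d b v' x xx f → Feasible n m E d b v x xx f) ∧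
    -- (b) continuity
    (∀ (v : Fin n → ℝ) (x : Fin n → ℝ) (xx : Fin n → Fin n → ℝ)
        (f : Fin n → Fin n × Fin n → ℝ),
      (∀ i, 0 ≤ v i) → Feasible n m E d b v x xx f →
      ∀ (i : Fin n) (x'i : ℝ), b i (d i) ≤ x'i → x'i ≤ x i →
        ∃ (x' : Fin n → ℝ) (xx' : Fin n → Fin n → ℝ) (f' : Fin n → Fin n × Fin n → ℝ),
          Feasible n m E d b v x' xx' f' ∧ x' i = x'i ∧
          ∀ j : Fin n, j ≠ i → x' j = x j) := by
  constructor
  · rintro v v' x xx f hv' hvv' ⟨h1, h2, h3, h4, h5, h6, h7, h8, h9, h10⟩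
    exact ⟨h1, h2, h3, h4, h5, h6, h7, h8, fun i => le_trans (h9 i) (hvv' i), h10⟩
  · rintro v x xx f hv ⟨h1, h2, h3, h4, h5, h6, h7, h8, h9, h10⟩ i x'i hbx hxx
    set t : ℝ := if x i = 0 then 0 else x'i / x i with ht
    have hxi0 : 0 ≤ x i := h1 i
    have hx'0 : 0 ≤ x'i := le_trans (hb i (d i)) hbx
    have ht0 : 0 ≤ t := by
      rw [ht]; split
      · exact le_refl 0
      · exact div_nonneg hx'0 hxi0
    have ht1 : t ≤ 1 := by
      rw [ht]; split
      · exact zero_le_one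
      · rename_i h
        exact (div_le_one (lt_of_le_of_ne hxi0 (Ne.symm h))).mpr hxx
    have htx : t * x i = x'i := by
      rw [ht]; split
      · rename_i h
        rw [h, mul_zero]
        linarith [hxx, h ▸ hxx]
      · rename_i h
        field_simp
    refine ⟨Function.update x i x'i,
      fun j k => if j = i then t * xx j k else xx j k,
      fun j e => if j = i then t * f j e else f j e,
      ⟨?_, ?_, ?_, ?_, ?_, ?_, ?_, ?_, ?_, ?_⟩, Function.update_self i x'i x,
      fun j hj => Function.update_of_ne hj x'i x⟩
    · intro j
      rcases eq_or_ne j i with rfl | hj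
      · rw [Function.update_self]; exact hx'0
      · rw [Function.update_of_ne hj]; exact h1 j
    · intro j k
      dsimp only
      split
      · exact mul_nonneg ht0 (h2 j k)
      · exact h2 j k
    · intro j e
      dsimp only
      split
      · exact mul_nonneg ht0 (h3 j e)
      · exact h3 j e
    · intro j e he
      dsimp only
      split
      · rw [h4 j e he, mul_zero]
      · exact h4 j e he
    · intro j
      rcases eq_or_ne j i with rfl | hj
      · simp only [Function.update_self, eq_self_iff_true, if_true, ← Finset.mul_sum, ← h5 j]
        exact htx.symm
      · simp only [Function.update_of_ne hj, if_neg hj]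
        exact h5 j
    · intro j
      rcases eq_or_ne j i with rfl | hj
      · simp only [Function.update_self, eq_self_iff_true, if_true, ← Finset.mul_sum,
          ← mul_add, ← h6 j]
        exact htx.symm
      · simp only [Function.update_of_ne hj, if_neg hj]
        exact h6 j
    · intro j k hjk
      rcases eq_or_ne j i with rfl | hj
      · simp only [eq_self_iff_true, if_true, ← Finset.mul_sum]
        rw [h7 j k hjk]; ring
      · simp only [if_neg hj]
        exact h7 j k hjk
    · intro j
      rcases eq_or_ne j i with rfl | hj
      · rw [Function.update_self]; exact hbx
      · rw [Function.update_of_ne hj]; exact h8 j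
    · intro j
      refine le_trans (add_le_add (Finset.sum_le_sum fun k _ => ?_)
        (Finset.sum_le_sum fun k _ => Finset.sum_le_sum fun e _ => ?_)) (h9 j)
      · dsimp only
        split
        · calc t * xx k j ≤ 1 * xx k j := by
                exact mul_le_mul_of_nonneg_right ht1 (h2 k j)
            _ = xx k j := one_mul _
        · exact le_refl _
      · dsimp only
        split
        · calc t * f k e ≤ 1 * f k e := mul_le_mul_of_nonneg_right ht1 (h3 k e)
            _ = f k e := one_mul _
        · exact le_refl _
    · intro j k
      refine le_trans (Finset.sum_le_sum fun l _ => ?_) (h10 j k)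
      dsimp only
      split
      · calc t * xx l j ≤ 1 * xx l j := mul_le_mul_of_nonneg_right ht1 (h2 l j)
          _ = xx l j := one_mul _
      · exact le_refl _
end

section
/- In the network route allocation model, for any feasible solution with total flows (x_1,…,x_n) under capacities (v_1,…,v_n), there exists a feasible solution under the same capacities with the same total flows (x_1,…,x_n) in which the direct server edge of every user is fully used by and only by that user, i.e., x'_{i,i} = b_{i,d_i} for every user i. -/
open Finset

namespace NRAux

variable {n : ℕ}

noncomputable def aout (E : Finset (Fin n × Fin n)) (F : Fin n × Fin n → ℝ) (q : Fin n) : ℝ :=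
  ∑ e ∈ E.filter (fun e => e.1 = q), F e

noncomputable def ain (E : Finset (Fin n × Fin n)) (F : Fin n × Fin n → ℝ) (q : Fin n) : ℝ :=
  ∑ e ∈ E.filter (fun e => e.2 = q), F e

lemma sum_aout (E : Finset (Fin n × Fin n)) (F : Fin n × Fin n → ℝ) :
    ∑ q, aout E F q = ∑ e ∈ E, F e :=
  Finset.sum_fiberwise_of_maps_to (fun e _ => mem_univ e.1) F

lemma sum_ain (E : Finset (Fin n × Fin n)) (F : Fin n × Fin n → ℝ) :
    ∑ q, ain E F q = ∑ e ∈ E, F e :=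
  Finset.sum_fiberwise_of_maps_to (fun e _ => mem_univ e.2) F

/-- if conservation with sources `s` holds away from `k`, then at `k`,
inflow equals outflow plus the total of the sources. -/
lemma node_balance (E : Finset (Fin n × Fin n)) (F : Fin n × Fin n → ℝ)
    (s : Fin n → ℝ) (k : Fin n)
    (hcons : ∀ q, q ≠ k → aout E F q = ain E F q + s q) :
    ain E F k = aout E F k + ∑ q ∈ univ.erase k, s q := by
  have h1 : ∑ q, aout E F q = ∑ q, ain E F q := by rw [sum_aout, sum_ain]
  rw [← Finset.add_sum_erase _ _ (mem_univ k), ← Finset.add_sum_erase _ _ (mem_univ k)] at h1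
  have h2 : ∑ q ∈ univ.erase k, aout E F q
      = ∑ q ∈ univ.erase k, (ain E F q + s q) :=
    Finset.sum_congr rfl (fun q hq => hcons q (Finset.ne_of_mem_erase hq))
  rw [h2, Finset.sum_add_distrib] at h1
  linarith

noncomputable def nextEdge (E : Finset (Fin n × Fin n)) (F : Fin n × Fin n → ℝ)
    (k : Fin n) (q : Fin n) : Fin n × Fin n :=
  if h : (E.filter (fun e => e.1 = q ∧ 0 < F e)).Nonempty then h.choose else (k, k)

lemma nextEdge_spec (E : Finset (Fin n × Fin n)) (F : Fin n × Fin n → ℝ)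
    (k : Fin n) (q : Fin n) (hq : 0 < aout E F q) :
    nextEdge E F k q ∈ E ∧ (nextEdge E F k q).1 = q ∧ 0 < F (nextEdge E F k q) := by
  have hne : (E.filter (fun e => e.1 = q ∧ 0 < F e)).Nonempty := by
    by_contra h
    rw [Finset.not_nonempty_iff_eq_empty, Finset.filter_eq_empty_iff] at h
    have : aout E F q ≤ 0 := by
      apply Finset.sum_nonpos
      intro e he
      rw [Finset.mem_filter] at he
      by_contra hpos
      exact h he.1 ⟨he.2, lt_of_not_ge hpos⟩
    linarith
  rw [nextEdge, dif_pos hne]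
  have := hne.choose_spec
  rw [Finset.mem_filter] at this
  exact ⟨this.1, this.2.1, this.2.2⟩

noncomputable def walk (E : Finset (Fin n × Fin n)) (F : Fin n × Fin n → ℝ)
    (k : Fin n) : ℕ → Fin n
  | 0 => k
  | j + 1 => (nextEdge E F k (walk E F k j)).2

lemma walk_out_pos (E : Finset (Fin n × Fin n)) (F : Fin n × Fin n → ℝ)
    (k : Fin n) (s : Fin n → ℝ)
    (hF0 : ∀ e, 0 ≤ F e) (hs : ∀ q, 0 ≤ s q)
    (hcons : ∀ q, q ≠ k → aout E F q = ain E F q + s q)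
    (hk : 0 < aout E F k) :
    ∀ j, 0 < aout E F (walk E F k j) := by
  intro j
  induction j with
  | zero => exact hk
  | succ j ih =>
    obtain ⟨hmem, hsrc, hpos⟩ := nextEdge_spec E F k _ ih
    have hin : 0 < ain E F (walk E F k (j + 1)) := by
      refine lt_of_lt_of_le hpos ?_
      apply Finset.single_le_sum (fun e _ => hF0 e)
      rw [Finset.mem_filter]
      exact ⟨hmem, rfl⟩
    by_cases h : walk E F k (j + 1) = k
    · rw [h]; exact hk
    · rw [hcons _ h]
      have := hs (walk E F k (j + 1))
      linarith


lemma cycle_remove (E : Finset (Fin n × Fin n)) (F : Fin n × Fin n → ℝ)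
    (k : Fin n) (s : Fin n → ℝ)
    (hF0 : ∀ e, 0 ≤ F e) (hs : ∀ q, 0 ≤ s q)
    (hcons : ∀ q, q ≠ k → aout E F q = ain E F q + s q)
    (hk : 0 < aout E F k) :
    ∃ F', (∀ e, 0 ≤ F' e) ∧ (∀ e, F' e ≤ F e) ∧
      (∀ q, q ≠ k → aout E F' q = ain E F' q + s q) ∧
      (E.filter fun e => F' e ≠ 0) ⊂ (E.filter fun e => F e ≠ 0) := by
  classical
  set w := walk E F k with hw
  have hwpos : ∀ j, 0 < aout E F (w j) := walk_out_pos E F k s hF0 hs hcons hk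
  set g : ℕ → Fin n × Fin n := fun j => nextEdge E F k (w j) with hg
  have hspec : ∀ j, g j ∈ E ∧ (g j).1 = w j ∧ 0 < F (g j) :=
    fun j => nextEdge_spec E F k (w j) (hwpos j)
  have hg2 : ∀ j, (g j).2 = w (j + 1) := fun j => rfl
  -- pigeonhole
  have hex : ∃ bb, ∃ aa, aa < bb ∧ w aa = w bb := by
    have hcard : Fintype.card (Fin n) < Fintype.card (Fin (n + 1)) := by simp
    obtain ⟨a, b, hne, heq⟩ :=
      Fintype.exists_ne_map_eq_of_card_lt (fun j : Fin (n + 1) => w j.1) hcard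
    have hne' : a.1 ≠ b.1 := fun hh => hne (Fin.val_injective hh)
    rcases lt_or_gt_of_ne hne' with h | h
    · exact ⟨b.1, a.1, h, heq⟩
    · exact ⟨a.1, b.1, h, heq.symm⟩
  set b0 := Nat.find hex with hb0
  obtain ⟨a0, ha0b0, hwab⟩ := Nat.find_spec hex
  have hdist : ∀ c c', c < c' → c' < b0 → w c ≠ w c' := by
    intro c c' h1 h2 heq
    exact Nat.find_min hex h2 ⟨c, h1, heq⟩
  set A := Finset.Ico a0 b0 with hA
  have hAne : A.Nonempty := by rw [hA, Finset.nonempty_Ico]; exact ha0b0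
  set cnt : Fin n × Fin n → ℕ := fun e => (A.filter (fun j => g j = e)).card with hcnt
  have hcnt_le : ∀ e, cnt e ≤ 1 := by
    intro e
    apply Finset.card_le_one.mpr
    intro c hc c' hc'
    rw [Finset.mem_filter, hA, Finset.mem_Ico] at hc hc'
    have hww : w c = w c' := by
      rw [← (hspec c).2.1, ← (hspec c').2.1, hc.2, hc'.2]
    by_contra hne
    rcases lt_or_gt_of_ne hne with h | h
    · exact hdist c c' h hc'.1.2 hww
    · exact hdist c' c h hc.1.2 hww.symm
  set I := A.image (fun j => F (g j)) with hI
  have hIne : I.Nonempty := hAne.image _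
  set δ := I.min' hIne with hδ
  have hδpos : 0 < δ := by
    obtain ⟨j, hj, hje⟩ := Finset.mem_image.mp (I.min'_mem hIne)
    rw [hδ, ← hje]
    exact (hspec j).2.2
  have hδle : ∀ e, 0 < cnt e → δ ≤ F e := by
    intro e h
    rw [hcnt] at h
    obtain ⟨j, hj⟩ := Finset.card_pos.mp h
    rw [Finset.mem_filter] at hj
    rw [← hj.2]
    exact Finset.min'_le _ _ (Finset.mem_image_of_mem _ hj.1)
  have hcntR : ∀ e, (cnt e : ℝ) = ∑ j ∈ A, (if g j = e then (1 : ℝ) else 0) := by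
    intro e
    rw [hcnt]
    simp only [Finset.card_filter]
    rw [Nat.cast_sum]
    exact Finset.sum_congr rfl (fun j _ => by split <;> simp)
  have hgen : ∀ (sel : Fin n × Fin n → Fin n) (q : Fin n),
      ∑ e ∈ E.filter (fun e => sel e = q), (cnt e : ℝ)
        = ∑ j ∈ A, (if sel (g j) = q then (1 : ℝ) else 0) := by
    intro sel q
    calc ∑ e ∈ E.filter (fun e => sel e = q), (cnt e : ℝ)
        = ∑ e ∈ E.filter (fun e => sel e = q), ∑ j ∈ A, (if g j = e then (1 : ℝ) else 0) :=
          Finset.sum_congr rfl (fun e _ => hcntR e)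
      _ = ∑ j ∈ A, ∑ e ∈ E.filter (fun e => sel e = q), (if g j = e then (1 : ℝ) else 0) :=
          Finset.sum_comm
      _ = ∑ j ∈ A, (if g j ∈ E.filter (fun e => sel e = q) then (1 : ℝ) else 0) :=
          Finset.sum_congr rfl (fun j _ => Finset.sum_ite_eq _ _ _)
      _ = ∑ j ∈ A, (if sel (g j) = q then (1 : ℝ) else 0) :=
          Finset.sum_congr rfl (fun j _ => by
            simp [Finset.mem_filter, (hspec j).1])
  -- the counting function on vertices
  set C : Fin n → ℝ := fun q => ∑ j ∈ A, (if w j = q then (1 : ℝ) else 0) with hC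
  have hout_cnt : ∀ q, ∑ e ∈ E.filter (fun e => e.1 = q), (cnt e : ℝ) = C q := by
    intro q
    rw [hgen Prod.fst q]
    exact Finset.sum_congr rfl (fun j _ => by rw [(hspec j).2.1])
  have hin_cnt : ∀ q, ∑ e ∈ E.filter (fun e => e.2 = q), (cnt e : ℝ) = C q := by
    intro q
    rw [hgen Prod.snd q]
    have h1 : ∑ j ∈ A, (if (g j).2 = q then (1 : ℝ) else 0)
        = ∑ j ∈ A, (if w (j + 1) = q then (1 : ℝ) else 0) :=
      Finset.sum_congr rfl (fun j _ => by rw [hg2 j])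
    rw [h1]
    show _ = ∑ j ∈ Finset.Ico a0 b0, (if w j = q then (1 : ℝ) else 0)
    -- shift the index
    have h2 : ∑ j ∈ Finset.Ico a0 b0, (if w (j + 1) = q then (1 : ℝ) else 0)
        = ∑ j ∈ Finset.Ico (a0 + 1) (b0 + 1), (if w j = q then (1 : ℝ) else 0) := by
      rw [Finset.sum_Ico_eq_sum_range, Finset.sum_Ico_eq_sum_range]
      have : b0 + 1 - (a0 + 1) = b0 - a0 := by omega
      rw [this]
      exact Finset.sum_congr rfl (fun j _ => by
        have : a0 + 1 + j = a0 + j + 1 := by omega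
        rw [this])
    have h3 : ∑ j ∈ Finset.Ico (a0 + 1) (b0 + 1), (if w j = q then (1 : ℝ) else 0)
        = (∑ j ∈ Finset.Ico (a0 + 1) b0, (if w j = q then (1 : ℝ) else 0))
          + (if w b0 = q then (1 : ℝ) else 0) :=
      Finset.sum_Ico_succ_top ha0b0 _
    have h4 : ∑ j ∈ Finset.Ico a0 b0, (if w j = q then (1 : ℝ) else 0)
        = (if w a0 = q then (1 : ℝ) else 0)
          + ∑ j ∈ Finset.Ico (a0 + 1) b0, (if w j = q then (1 : ℝ) else 0) :=
      Finset.sum_eq_sum_Ico_succ_bot ha0b0 _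
    rw [h2, h3, h4, hwab]
    ring
  refine ⟨fun e => F e - δ * (cnt e : ℝ), ?_, ?_, ?_, ?_⟩
  · intro e
    show 0 ≤ F e - δ * (cnt e : ℝ)
    rcases Nat.eq_zero_or_pos (cnt e) with h | h
    · simp [h, hF0 e]
    · have h1 : cnt e = 1 := le_antisymm (hcnt_le e) h
      have h2 := hδle e h
      rw [h1]
      simp only [Nat.cast_one, mul_one]
      linarith
  · intro e
    show F e - δ * (cnt e : ℝ) ≤ F e
    have : 0 ≤ δ * (cnt e : ℝ) := mul_nonneg hδpos.le (Nat.cast_nonneg _)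
    linarith
  · intro q hq
    have e1 : aout E (fun e => F e - δ * (cnt e : ℝ)) q = aout E F q - δ * C q := by
      simp only [aout]
      rw [Finset.sum_sub_distrib, ← Finset.mul_sum, hout_cnt q]
    have e2 : ain E (fun e => F e - δ * (cnt e : ℝ)) q = ain E F q - δ * C q := by
      simp only [ain]
      rw [Finset.sum_sub_distrib, ← Finset.mul_sum, hin_cnt q]
    rw [e1, e2, hcons q hq]
    ring
  · have hsub : (E.filter fun e => F e - δ * (cnt e : ℝ) ≠ 0) ⊆ (E.filter fun e => F e ≠ 0) := by
      intro e he
      rw [Finset.mem_filter] at he ⊢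
      refine ⟨he.1, ?_⟩
      intro h0
      have h1 : 0 ≤ δ * (cnt e : ℝ) := mul_nonneg hδpos.le (Nat.cast_nonneg _)
      rcases Nat.eq_zero_or_pos (cnt e) with h | h
      · apply he.2; rw [h0, h]; simp
      · have := hδle e h
        linarith [hF0 e]
    rw [Finset.ssubset_iff_of_subset hsub]
    obtain ⟨j0, hj0, hj0e⟩ := Finset.mem_image.mp (I.min'_mem hIne)
    refine ⟨g j0, ?_, ?_⟩
    · rw [Finset.mem_filter]
      exact ⟨(hspec j0).1, ne_of_gt (hspec j0).2.2⟩
    · intro hmem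
      rw [Finset.mem_filter] at hmem
      apply hmem.2
      have hc1 : cnt (g j0) = 1 := by
        refine le_antisymm (hcnt_le _) ?_
        apply Finset.card_pos.mpr
        exact ⟨j0, Finset.mem_filter.mpr ⟨hj0, rfl⟩⟩
      show F (g j0) - δ * (cnt (g j0) : ℝ) = 0
      rw [hc1, hδ, ← hj0e]
      push_cast
      ring


lemma cleanup_aux (E : Finset (Fin n × Fin n)) (k : Fin n) (s : Fin n → ℝ)
    (hs : ∀ q, 0 ≤ s q) :
    ∀ (N : ℕ) (F : Fin n × Fin n → ℝ),
      (E.filter fun e => F e ≠ 0).card ≤ N →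
      (∀ e, 0 ≤ F e) → (∀ e ∉ E, F e = 0) →
      (∀ q, q ≠ k → aout E F q = ain E F q + s q) →
      ∃ F', (∀ e, 0 ≤ F' e) ∧ (∀ e, F' e ≤ F e) ∧
        (∀ q, q ≠ k → aout E F' q = ain E F' q + s q) ∧ aout E F' k = 0 := by
  intro N
  induction N with
  | zero =>
    intro F hcard hF0 hFE hcons
    refine ⟨F, hF0, fun e => le_refl _, hcons, ?_⟩
    have hzero : ∀ e ∈ E, F e = 0 := by
      intro e he
      by_contra h
      have : e ∈ E.filter fun e => F e ≠ 0 := Finset.mem_filter.mpr ⟨he, h⟩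
      have := Finset.card_pos.mpr ⟨e, this⟩
      omega
    apply Finset.sum_eq_zero
    intro e he
    exact hzero e (Finset.mem_filter.mp he).1
  | succ N ih =>
    intro F hcard hF0 hFE hcons
    by_cases hk : aout E F k = 0
    · exact ⟨F, hF0, fun e => le_refl _, hcons, hk⟩
    · have hkpos : 0 < aout E F k := by
        rcases lt_or_eq_of_le (Finset.sum_nonneg (fun e _ => hF0 e) :
          (0:ℝ) ≤ aout E F k) with h | h
        · exact h
        · exact absurd h.symm hk
      obtain ⟨F2, hF20, hF2le, hF2cons, hF2sub⟩ :=
        cycle_remove E F k s hF0 hs hcons hkpos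
      have hF2E : ∀ e ∉ E, F2 e = 0 := by
        intro e he
        exact le_antisymm (by rw [← hFE e he]; exact hF2le e) (hF20 e)
      have hcard2 : (E.filter fun e => F2 e ≠ 0).card ≤ N := by
        have := Finset.card_lt_card hF2sub
        omega
      obtain ⟨F', h1, h2, h3, h4⟩ := ih F2 hcard2 hF20 hF2E hF2cons
      exact ⟨F', h1, fun e => le_trans (h2 e) (hF2le e), h3, h4⟩

lemma cleanup (E : Finset (Fin n × Fin n)) (k : Fin n) (s : Fin n → ℝ)
    (hs : ∀ q, 0 ≤ s q) (F : Fin n × Fin n → ℝ)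
    (hF0 : ∀ e, 0 ≤ F e) (hFE : ∀ e ∉ E, F e = 0)
    (hcons : ∀ q, q ≠ k → aout E F q = ain E F q + s q) :
    ∃ F', (∀ e, 0 ≤ F' e) ∧ (∀ e, F' e ≤ F e) ∧
      (∀ q, q ≠ k → aout E F' q = ain E F' q + s q) ∧ aout E F' k = 0 :=
  cleanup_aux E k s hs _ F (le_refl _) hF0 hFE hcons


def Clean {n m : ℕ} (d : Fin n → Fin m) (xx : Fin n → Fin n → ℝ) (j : Fin n) : Prop :=
  ∀ k, k ≠ j → d k = d j → xx k j = 0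

lemma out_self {m : ℕ} (E : Finset (Fin n × Fin n)) (d : Fin n → Fin m)
    (b : Fin n → Fin m → ℝ) (v : Fin n → ℝ)
    (x : Fin n → ℝ) (xx : Fin n → Fin n → ℝ) (f : Fin n → Fin n × Fin n → ℝ)
    (hF : Feasible n m E d b v x xx f) (l : Fin n) :
    aout E (f l) l = 0 := by
  obtain ⟨hx0, hxx0, hf0, hfE, h1, h2, h3, h4, h5, h6⟩ := hF
  have hnb := node_balance E (f l) (xx l) l
    (fun q hq => h3 l q (Ne.symm hq))
  have hsp : ∑ q, xx l q = xx l l + ∑ q ∈ univ.erase l, xx l q :=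
    (Finset.add_sum_erase _ (xx l) (mem_univ l)).symm
  have h2l := h2 l
  have h1l := h1 l
  have : ain E (f l) l = ∑ e ∈ E.filter (fun e => e.2 = l), f l e := rfl
  linarith [hnb, this]

lemma clean_column {m : ℕ} (E : Finset (Fin n × Fin n)) (d : Fin n → Fin m)
    (b : Fin n → Fin m → ℝ) (v : Fin n → ℝ)
    (x : Fin n → ℝ) (xx : Fin n → Fin n → ℝ) (f : Fin n → Fin n × Fin n → ℝ)
    (i : Fin n) (hF : Feasible n m E d b v x xx f) :
    ∃ xx' f', Feasible n m E d b v x xx' f' ∧ Clean d xx' i ∧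
      (∀ j, j ≠ i → Clean d xx j → Clean d xx' j) := by
  classical
  have houts : ∀ l, aout E (f l) l = 0 := out_self E d b v x xx f hF
  obtain ⟨hx0, hxx0, hf0, hfE, h1, h2, h3, h4, h5, h6⟩ := hF
  by_cases hcln : Clean d xx i
  · exact ⟨xx, f, ⟨hx0, hxx0, hf0, hfE, h1, h2, h3, h4, h5, h6⟩, hcln,
      fun j _ hj => hj⟩
  set G : Finset (Fin n) := univ.filter (fun k => d k = d i ∧ k ≠ i) with hG
  set ε : ℝ := ∑ k ∈ G, xx k i with hε
  have hε0 : 0 ≤ ε := Finset.sum_nonneg (fun k _ => hxx0 k i)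
  have hεpos : 0 < ε := by
    rw [Clean] at hcln
    push_neg at hcln
    obtain ⟨k, hk1, hk2, hk3⟩ := hcln
    have hkG : k ∈ G := by rw [hG]; simp [hk1, hk2]
    have : xx k i ≤ ε := Finset.single_le_sum (fun l _ => hxx0 l i) hkG
    rcases lt_or_eq_of_le (hxx0 k i) with h | h
    · linarith
    · exact absurd h.symm hk3
  set In : ℝ := ∑ e ∈ E.filter (fun e => e.2 = i), f i e with hIndef
  have hIn : In = x i - xx i i := by linarith [h2 i]
  have hiG : i ∉ G := by rw [hG]; simp
  have hGi : univ.filter (fun k => d k = d i) = insert i G := by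
    ext k
    rw [hG]
    by_cases hk : k = i <;> simp [hk]
  have hεB : ε ≤ b i (d i) - xx i i := by
    have h6i := h6 i (d i)
    rw [hGi, Finset.sum_insert hiG] at h6i
    linarith
  have hεI : ε ≤ In := by have := h4 i; linarith
  have hInpos : 0 < In := lt_of_lt_of_le hεpos hεI
  have hIn0 : In ≠ 0 := ne_of_gt hInpos
  set μ : Fin n → ℝ := fun l =>
    if l = i then -(ε / In) else (if d l = d i ∧ l ≠ i then xx l i / In else 0) with hμ
  have hμi : μ i = -(ε / In) := by rw [hμ]; simp
  have hμbad : ∀ l, l ≠ i → d l = d i → μ l = xx l i / In := by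
    intro l hl hd; rw [hμ]; simp [hl, hd]
  have hμoth : ∀ l, l ≠ i → ¬(d l = d i) → μ l = 0 := by
    intro l hl hd; rw [hμ]; simp [hl, hd]
  have hμnn : ∀ l, l ≠ i → 0 ≤ μ l := by
    intro l hl
    by_cases hd : d l = d i
    · rw [hμbad l hl hd]; exact div_nonneg (hxx0 l i) hInpos.le
    · rw [hμoth l hl hd]
  have hμIn : ∀ l, l ≠ i → d l = d i → μ l * In = xx l i := by
    intro l hl hd
    rw [hμbad l hl hd, div_mul_cancel₀ _ hIn0]
  have hμiIn : μ i * In = -ε := by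
    rw [hμi]; field_simp
  have hμG : ∑ l ∈ G, μ l = ε / In := by
    rw [hε, Finset.sum_div]
    apply Finset.sum_congr rfl
    intro l hl
    rw [hG, Finset.mem_filter] at hl
    exact hμbad l hl.2.2 hl.2.1
  have hμsum_grp : ∀ jj : Fin m, ∑ l ∈ univ.filter (fun l => d l = jj), μ l = 0 := by
    intro jj
    by_cases hj : jj = d i
    · subst hj
      rw [hGi, Finset.sum_insert hiG, hμG, hμi]
      ring
    · apply Finset.sum_eq_zero
      intro l hl
      rw [Finset.mem_filter] at hl
      have hli : l ≠ i := by rintro rfl; exact hj hl.2.symm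
      exact hμoth l hli (fun h => hj (hl.2.symm.trans h))
  have hμsum : ∑ l, μ l = 0 := by
    rw [← Finset.sum_filter_add_sum_filter_not univ (fun l => d l = d i)]
    rw [hμsum_grp (d i), zero_add]
    apply Finset.sum_eq_zero
    intro l hl
    rw [Finset.mem_filter] at hl
    have hli : l ≠ i := by rintro rfl; exact hl.2 rfl
    exact hμoth l hli hl.2
  -- new solution
  set xx1 : Fin n → Fin n → ℝ :=
    fun l j => if j = i then xx l i - μ l * In else xx l j + μ l * xx i j with hxx1
  set f1 : Fin n → Fin n × Fin n → ℝ := fun l e => f l e + μ l * f i e with hf1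
  have hxx1i : ∀ l, xx1 l i = xx l i - μ l * In := by intro l; rw [hxx1]; simp
  have hxx1o : ∀ l j, j ≠ i → xx1 l j = xx l j + μ l * xx i j := by
    intro l j hj; rw [hxx1]; simp [hj]
  have hfrac : ε / In ≤ 1 := (div_le_one hInpos).mpr hεI
  have hxx1nn : ∀ l j, 0 ≤ xx1 l j := by
    intro l jj
    by_cases hj : jj = i
    · rw [hj, hxx1i]
      by_cases hl : l = i
      · rw [hl, hμiIn]; have := hxx0 i i; linarith
      · by_cases hd : d l = d i
        · rw [hμIn l hl hd]; simp
        · rw [hμoth l hl hd]; simp [hxx0 l i]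
    · rw [hxx1o l jj hj]
      by_cases hl : l = i
      · rw [hl, hμi]
        have h1'' := hxx0 i jj
        have heq : xx i jj + -(ε / In) * xx i jj = xx i jj * (1 - ε / In) := by ring
        rw [heq]
        apply mul_nonneg h1''
        linarith
      · exact add_nonneg (hxx0 l jj) (mul_nonneg (hμnn l hl) (hxx0 i jj))
  have hf1nn : ∀ l e, 0 ≤ f1 l e := by
    intro l e
    by_cases hl : l = i
    · have heq : f1 l e = f i e * (1 - ε / In) := by
        rw [hf1]; simp only []; rw [hl, hμi]; ring
      rw [heq]
      apply mul_nonneg (hf0 i e)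
      linarith
    · rw [hf1]
      exact add_nonneg (hf0 l e) (mul_nonneg (hμnn l hl) (hf0 i e))
  have hf1E : ∀ l, ∀ e ∉ E, f1 l e = 0 := by
    intro l e he
    rw [hf1]
    simp only []
    rw [hfE l e he, hfE i e he]
    ring
  have haout1 : ∀ l q, aout E (f1 l) q = aout E (f l) q + μ l * aout E (f i) q := by
    intro l q
    simp only [aout, hf1, Finset.sum_add_distrib, Finset.mul_sum]
  have hain1 : ∀ l q, ain E (f1 l) q = ain E (f l) q + μ l * ain E (f i) q := by
    intro l q
    simp only [ain, hf1, Finset.sum_add_distrib, Finset.mul_sum]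
  have hainIn : ain E (f i) i = In := rfl
  have hcons1 : ∀ l q, q ≠ l → aout E (f1 l) q = ain E (f1 l) q + xx1 l q := by
    intro l q hql
    rw [haout1, hain1]
    by_cases hqi : q = i
    · have hli : l ≠ i := fun h => hql (hqi.trans h.symm)
      have haq : aout E (f l) i = ain E (f l) i + xx l i := h3 l i hli
      rw [hqi, hxx1i, houts i, hainIn, haq]
      ring
    · have h3l := h3 l q (Ne.symm hql)
      have h3i := h3 i q (fun h => hqi h.symm)
      rw [hxx1o l q hqi]
      have haq : aout E (f l) q = ain E (f l) q + xx l q := h3l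
      have haq2 : aout E (f i) q = ain E (f i) q + xx i q := h3i
      rw [haq, haq2]
      ring
  have herasexx : ∀ l, ∑ j ∈ univ.erase i, xx l j = x l - xx l i := by
    intro l
    have := (Finset.add_sum_erase _ (xx l) (mem_univ i)).symm
    linarith [h1 l]
  have herasei : ∑ j ∈ univ.erase i, xx i j = In := by
    rw [herasexx i, hIn]
  have h1' : ∀ l, x l = ∑ j, xx1 l j := by
    intro l
    rw [← Finset.add_sum_erase _ (xx1 l) (mem_univ i), hxx1i]
    have : ∑ j ∈ univ.erase i, xx1 l j
        = ∑ j ∈ univ.erase i, (xx l j + μ l * xx i j) := by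
      apply Finset.sum_congr rfl
      intro j hj
      exact hxx1o l j (Finset.ne_of_mem_erase hj)
    rw [this, Finset.sum_add_distrib, ← Finset.mul_sum, herasexx l, herasei]
    ring
  -- cleanup each commodity
  have hcl : ∀ l, ∃ F', (∀ e, 0 ≤ F' e) ∧ (∀ e, F' e ≤ f1 l e) ∧
      (∀ q, q ≠ l → aout E F' q = ain E F' q + xx1 l q) ∧ aout E F' l = 0 :=
    fun l => cleanup E l (xx1 l) (fun q => hxx1nn l q) (f1 l) (hf1nn l) (hf1E l)
      (fun q hq => hcons1 l q hq)
  choose f2 hf20 hf2le hf2cons hf2out using hcl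
  have hf2E : ∀ l, ∀ e ∉ E, f2 l e = 0 := by
    intro l e he
    exact le_antisymm (by rw [← hf1E l e he]; exact hf2le l e) (hf20 l e)
  have h2' : ∀ l, x l = xx1 l l + ain E (f2 l) l := by
    intro l
    have hnb := node_balance E (f2 l) (xx1 l) l (fun q hq => hf2cons l q hq)
    rw [hf2out l] at hnb
    have hsp : ∑ q, xx1 l q = xx1 l l + ∑ q ∈ univ.erase l, xx1 l q :=
      (Finset.add_sum_erase _ (xx1 l) (mem_univ l)).symm
    have h1l := h1' l
    linarith
  -- column sums of xx1
  have hcolsum : ∀ (T : Finset (Fin n)) (p : Fin n),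
      (∑ l ∈ T, μ l = 0) → ∑ l ∈ T, xx1 l p = ∑ l ∈ T, xx l p := by
    intro T p hT
    by_cases hp : p = i
    · have : ∀ l ∈ T, xx1 l p = xx l p - μ l * In := fun l _ => hp ▸ hxx1i l
      rw [Finset.sum_congr rfl this, Finset.sum_sub_distrib, ← Finset.sum_mul, hT]
      ring
    · have : ∀ l ∈ T, xx1 l p = xx l p + μ l * xx i p := fun l _ => hxx1o l p hp
      rw [Finset.sum_congr rfl this, Finset.sum_add_distrib, ← Finset.sum_mul, hT]
      ring
  have h5' : ∀ p, (∑ l, xx1 l p) + (∑ l, ain E (f2 l) p) ≤ v p := by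
    intro p
    have e1 : ∑ l, xx1 l p = ∑ l, xx l p := hcolsum univ p hμsum
    have e2 : ∑ l, ain E (f2 l) p ≤ ∑ l, ain E (f1 l) p := by
      apply Finset.sum_le_sum
      intro l _
      apply Finset.sum_le_sum
      intro e _
      exact hf2le l e
    have e3 : ∑ l, ain E (f1 l) p = ∑ l, ain E (f l) p := by
      have : ∀ l ∈ univ, ain E (f1 l) p = ain E (f l) p + μ l * ain E (f i) p :=
        fun l _ => hain1 l p
      rw [Finset.sum_congr rfl this, Finset.sum_add_distrib, ← Finset.sum_mul, hμsum]
      ring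
    have h5p := h5 p
    have : ain E (f i) p = ∑ e ∈ E.filter (fun e => e.2 = p), f i e := rfl
    calc (∑ l, xx1 l p) + (∑ l, ain E (f2 l) p)
        ≤ (∑ l, xx l p) + (∑ l, ain E (f l) p) := by
          rw [e1]; linarith [e2, e3]
      _ ≤ v p := h5p
  have h6' : ∀ (p : Fin n) (jj : Fin m),
      ∑ k ∈ univ.filter (fun k => d k = jj), xx1 k p ≤ b p jj := by
    intro p jj
    rw [hcolsum _ p (hμsum_grp jj)]
    exact h6 p jj
  refine ⟨xx1, f2, ⟨hx0, hxx1nn, hf20, hf2E, h1', h2', ?_, h4, h5', h6'⟩, ?_, ?_⟩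
  · intro l q hlq
    exact hf2cons l q (Ne.symm hlq)
  · intro k hk hd
    rw [hxx1i, hμIn k hk hd]
    ring
  · intro j hji hcld k hkj hdkj
    rw [hxx1o k j hji]
    rw [hcld k hkj hdkj]
    by_cases hdi : d i = d j
    · have hij : i ≠ j := fun h => hji h.symm
      rw [hcld i hij hdi]
      ring
    · have hki : k ≠ i := by
        rintro rfl
        exact hdi hdkj
      have hkd : ¬(d k = d i) := by
        intro h
        exact hdi (h ▸ hdkj)
      rw [hμoth k hki hkd]
      ring


lemma clean_all {m : ℕ} (E : Finset (Fin n × Fin n)) (d : Fin n → Fin m)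
    (b : Fin n → Fin m → ℝ) (v : Fin n → ℝ) :
    ∀ (U : Finset (Fin n)) (x : Fin n → ℝ) (xx : Fin n → Fin n → ℝ)
      (f : Fin n → Fin n × Fin n → ℝ),
      Feasible n m E d b v x xx f → (∀ j ∉ U, Clean d xx j) →
      ∃ xx' f', Feasible n m E d b v x xx' f' ∧ ∀ j, Clean d xx' j := by
  intro U
  induction U using Finset.induction_on with
  | empty =>
    intro x xx f hF hcl
    exact ⟨xx, f, hF, fun j => hcl j (Finset.notMem_empty j)⟩
  | @insert a U' ha ih =>
    intro x xx f hF hcl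
    obtain ⟨xx1, f1, hF1, hcla, hpres⟩ := clean_column E d b v x xx f a hF
    apply ih x xx1 f1 hF1
    intro j hj
    by_cases hja : j = a
    · rw [hja]; exact hcla
    · refine hpres j hja (hcl j ?_)
      simp [hja, hj]

lemma saturate {m : ℕ} (E : Finset (Fin n × Fin n)) (d : Fin n → Fin m)
    (b : Fin n → Fin m → ℝ) (v : Fin n → ℝ)
    (x : Fin n → ℝ) (xx : Fin n → Fin n → ℝ) (f : Fin n → Fin n × Fin n → ℝ)
    (hb : ∀ i j, 0 ≤ b i j)
    (hF : Feasible n m E d b v x xx f) (hcl : ∀ j, Clean d xx j) :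
    ∃ xx' f', Feasible n m E d b v x xx' f' ∧ ∀ i, xx' i i = b i (d i) := by
  classical
  obtain ⟨hx0, hxx0, hf0, hfE, h1, h2, h3, h4, h5, h6⟩ := hF
  have hxxb : ∀ l, xx l l ≤ b l (d l) := by
    intro l
    have h6l := h6 l (d l)
    have hmem : l ∈ univ.filter (fun k => d k = d l) := by simp
    have := Finset.single_le_sum (f := fun k => xx k l)
      (fun k _ => hxx0 k l) hmem
    linarith
  set t : Fin n → ℝ := fun l =>
    if x l = xx l l then (1 : ℝ) else (x l - b l (d l)) / (x l - xx l l) with ht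
  have hbx : ∀ l, b l (d l) ≤ x l := h4
  have htIn : ∀ l, t l * (x l - xx l l) = x l - b l (d l) := by
    intro l
    rw [ht]
    by_cases hl : x l = xx l l
    · simp [hl]
      have hb1 : b l (d l) ≤ x l := hbx l
      have hb2 : xx l l ≤ b l (d l) := hxxb l
      linarith
    · simp [hl]
      rw [div_mul_cancel₀]
      intro h
      exact hl (by linarith)
  have hdenpos : ∀ l, ¬(x l = xx l l) → 0 < x l - xx l l := by
    intro l hl
    have hb1 := hbx l
    have hb2 := hxxb l
    rcases lt_or_eq_of_le (by linarith : xx l l ≤ x l) with h | h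
    · linarith
    · exact absurd h.symm hl
  have ht0 : ∀ l, 0 ≤ t l := by
    intro l
    rw [ht]
    by_cases hl : x l = xx l l
    · simp [hl]
    · simp [hl]
      apply div_nonneg
      · linarith [hbx l]
      · linarith [hdenpos l hl]
  have ht1 : ∀ l, t l ≤ 1 := by
    intro l
    rw [ht]
    by_cases hl : x l = xx l l
    · simp [hl]
    · simp [hl]
      rw [div_le_one (hdenpos l hl)]
      linarith [hxxb l]
  set xx' : Fin n → Fin n → ℝ :=
    fun l j => if j = l then b l (d l) else t l * xx l j with hxx'
  set f' : Fin n → Fin n × Fin n → ℝ := fun l e => t l * f l e with hf'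
  have hxx'd : ∀ l, xx' l l = b l (d l) := by intro l; rw [hxx']; simp
  have hxx'o : ∀ l j, j ≠ l → xx' l j = t l * xx l j := by
    intro l j hj; rw [hxx']; simp [hj]
  have haout' : ∀ l q, aout E (f' l) q = t l * aout E (f l) q := by
    intro l q; simp only [aout, hf', Finset.mul_sum]
  have hain' : ∀ l q, ain E (f' l) q = t l * ain E (f l) q := by
    intro l q; simp only [ain, hf', Finset.mul_sum]
  have hainl : ∀ l, ain E (f l) l = x l - xx l l := by
    intro l
    have := h2 l
    have hh : ain E (f l) l = ∑ e ∈ E.filter (fun e => e.2 = l), f l e := rfl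
    linarith
  have herase : ∀ l, ∑ j ∈ univ.erase l, xx l j = x l - xx l l := by
    intro l
    have := (Finset.add_sum_erase _ (xx l) (mem_univ l)).symm
    linarith [h1 l]
  refine ⟨xx', f', ⟨hx0, ?_, ?_, ?_, ?_, ?_, ?_, h4, ?_, ?_⟩, hxx'd⟩
  · -- xx' nonneg
    intro l j
    by_cases hj : j = l
    · rw [hj, hxx'd]; exact hb l (d l)
    · rw [hxx'o l j hj]; exact mul_nonneg (ht0 l) (hxx0 l j)
  · -- f' nonneg
    intro l e
    exact mul_nonneg (ht0 l) (hf0 l e)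
  · -- f' off E
    intro l e he
    rw [hf']
    simp only []
    rw [hfE l e he]
    ring
  · -- (1)
    intro l
    rw [← Finset.add_sum_erase _ (xx' l) (mem_univ l), hxx'd]
    have hcongr : ∑ j ∈ univ.erase l, xx' l j = ∑ j ∈ univ.erase l, t l * xx l j :=
      Finset.sum_congr rfl (fun j hj => hxx'o l j (Finset.ne_of_mem_erase hj))
    rw [hcongr, ← Finset.mul_sum, herase l, htIn l]
    ring
  · -- (2)
    intro l
    have hh : ∑ e ∈ E.filter (fun e => e.2 = l), f' l e = ain E (f' l) l := rfl
    rw [hh, hxx'd, hain', hainl, htIn]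
    ring
  · -- (3)
    intro l q hlq
    have hgoal : aout E (f' l) q = ain E (f' l) q + xx' l q := by
      rw [haout', hain', hxx'o l q (Ne.symm hlq)]
      have := h3 l q hlq
      have hout : aout E (f l) q = ain E (f l) q + xx l q := this
      rw [hout]
      ring
    exact hgoal
  · -- (5)
    intro p
    have hxx'le : ∑ l ∈ univ.erase p, xx' l p ≤ ∑ l ∈ univ.erase p, xx l p := by
      apply Finset.sum_le_sum
      intro l hl
      have hlp : p ≠ l := fun h => (Finset.ne_of_mem_erase hl) h.symm
      rw [hxx'o l p hlp]
      calc t l * xx l p ≤ 1 * xx l p :=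
            mul_le_mul_of_nonneg_right (ht1 l) (hxx0 l p)
        _ = xx l p := one_mul _
    have hsplit1 : ∑ l, xx' l p = xx' p p + ∑ l ∈ univ.erase p, xx' l p :=
      (Finset.add_sum_erase _ (fun l => xx' l p) (mem_univ p)).symm
    have hsplit2 : ∑ l, ain E (f' l) p
        = ain E (f' p) p + ∑ l ∈ univ.erase p, ain E (f' l) p :=
      (Finset.add_sum_erase _ (fun l => ain E (f' l) p) (mem_univ p)).symm
    have hsplit3 : ∑ l, xx l p = xx p p + ∑ l ∈ univ.erase p, xx l p :=
      (Finset.add_sum_erase _ (fun l => xx l p) (mem_univ p)).symm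
    have hsplit4 : ∑ l, ain E (f l) p
        = ain E (f p) p + ∑ l ∈ univ.erase p, ain E (f l) p :=
      (Finset.add_sum_erase _ (fun l => ain E (f l) p) (mem_univ p)).symm
    have hainle : ∑ l ∈ univ.erase p, ain E (f' l) p
        ≤ ∑ l ∈ univ.erase p, ain E (f l) p := by
      apply Finset.sum_le_sum
      intro l _
      rw [hain']
      have hain0 : 0 ≤ ain E (f l) p := Finset.sum_nonneg (fun e _ => hf0 l e)
      calc t l * ain E (f l) p ≤ 1 * ain E (f l) p :=
            mul_le_mul_of_nonneg_right (ht1 l) hain0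
        _ = _ := one_mul _
    have hfp : ain E (f' p) p = x p - b p (d p) := by
      rw [hain', hainl, htIn]
    have h5p : (∑ j, xx j p) + (∑ j, ain E (f j) p) ≤ v p := h5 p
    have hgoal : (∑ l, xx' l p) + (∑ l, ain E (f' l) p) ≤ v p := by
      rw [hsplit1, hsplit2, hxx'd, hfp]
      rw [hsplit3, hsplit4] at h5p
      have h2p : ain E (f p) p = x p - xx p p := hainl p
      linarith
    exact hgoal
  · -- (6)
    intro p jj
    by_cases hdp : d p = jj
    · have hmem : p ∈ univ.filter (fun k => d k = jj) := by simp [hdp]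
      rw [← Finset.add_sum_erase _ _ hmem, hxx'd]
      have hz : ∑ k ∈ (univ.filter (fun k => d k = jj)).erase p, xx' k p = 0 := by
        apply Finset.sum_eq_zero
        intro k hk
        have hk1 : k ≠ p := Finset.ne_of_mem_erase hk
        have hk2 : d k = jj := (Finset.mem_filter.mp (Finset.mem_of_mem_erase hk)).2
        rw [hxx'o k p (Ne.symm hk1), hcl p k hk1 (hk2.trans hdp.symm)]
        ring
      rw [hz, hdp]
      ring_nf
      exact le_refl _
    · have : ∀ k ∈ univ.filter (fun k => d k = jj), xx' k p ≤ xx k p := by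
        intro k hk
        have hk2 : d k = jj := (Finset.mem_filter.mp hk).2
        have hpk : p ≠ k := by rintro rfl; exact hdp hk2
        rw [hxx'o k p hpk]
        calc t k * xx k p ≤ 1 * xx k p :=
              mul_le_mul_of_nonneg_right (ht1 k) (hxx0 k p)
          _ = xx k p := one_mul _
      calc ∑ k ∈ univ.filter (fun k => d k = jj), xx' k p
          ≤ ∑ k ∈ univ.filter (fun k => d k = jj), xx k p := Finset.sum_le_sum this
        _ ≤ b p jj := h6 p jj

end NRAux

/-- For any feasible solution of the network route allocation problem,
there is a feasible solution under the same capacities with the same total flows in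
which the direct server edge of every user is fully used by (and, by the server-edge
capacity constraint, only by) that user: `xx' i i = b i (d i)` for every user `i`. -/

theorem network_direct_edge_exhausted
    (n m : ℕ) (E : Finset (Fin n × Fin n)) (d : Fin n → Fin m)
    (b : Fin n → Fin m → ℝ) (c : Fin n → ℝ)
    (hb : ∀ i j, 0 ≤ b i j) (hc : ∀ i, 0 < c i) :
    ∀ (v : Fin n → ℝ) (x : Fin n → ℝ) (xx : Fin n → Fin n → ℝ)
        (f : Fin n → Fin n × Fin n → ℝ),
      (∀ i, 0 ≤ v i) → Feasible n m E d b v x xx f →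
      ∃ (xx' : Fin n → Fin n → ℝ) (f' : Fin n → Fin n × Fin n → ℝ),
        Feasible n m E d b v x xx' f' ∧ ∀ i : Fin n, xx' i i = b i (d i) := by
  intro v x xx f hv hF
  obtain ⟨xx1, f1, hF1, hcl⟩ := NRAux.clean_all E d b v Finset.univ x xx f hF
    (fun j hj => absurd (Finset.mem_univ j) hj)
  exact NRAux.saturate E d b v x xx1 f1 hb hF1 hcl
end

section
/- In the network route allocation model with b_{i,d_i} > 0 for every user i, the utility functions u_i = −c_i/x_i are monotone: for every user i, every capacity profile (v_1,…,v_n), every feasible solution with total flows (x_1,…,x_n) under (v_1,…,v_n), and every δ with 0 < δ ≤ −c_i/x_i + c_i/b_{i,d_i}, there exists ε > 0 such that for every 0 < ε' < ε there is a feasible solution under (v_1,…,v_i − ε',…,v_n) whose total flows give u_j unchanged for every j ≠ i (total flow x_j) and give user i utility at least −c_i/x_i − δ. -/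
/-- In the network route allocation model with `b i (d i) > 0` for every
user, the utility functions `u_i = -c_i / x_i` are monotone: for every feasible solution,
every user `i` and every `0 < δ ≤ -c_i/x_i + c_i/b_{i,d_i}`, there is an `ε > 0` such
that for every `0 < ε' < ε` there is a solution feasible after decreasing `v i` by `ε'`
that leaves every other user's total flow (hence utility) unchanged and gives user `i`
utility at least `-c_i/x_i - δ`. -/
theorem network_utilities_monotone
    (n m : ℕ) (E : Finset (Fin n × Fin n)) (d : Fin n → Fin m)
    (b : Fin n → Fin m → ℝ) (c : Fin n → ℝ)
    (hb : ∀ i j, 0 ≤ b i j) (hbd : ∀ i, 0 < b i (d i)) (hc : ∀ i, 0 < c i) :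
    ∀ (v : Fin n → ℝ) (x : Fin n → ℝ) (xx : Fin n → Fin n → ℝ)
        (f : Fin n → Fin n × Fin n → ℝ),
      (∀ i, 0 ≤ v i) → Feasible n m E d b v x xx f →
      ∀ (i : Fin n) (δ : ℝ), 0 < δ → δ ≤ -(c i / x i) + c i / b i (d i) →
        ∃ ε > (0 : ℝ), ∀ ε' : ℝ, 0 < ε' → ε' < ε →
          ∃ (x' : Fin n → ℝ) (xx' : Fin n → Fin n → ℝ)
              (f' : Fin n → Fin n × Fin n → ℝ),
            Feasible n m E d b (Function.update v i (v i - ε')) x' xx' f' ∧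
            (∀ j : Fin n, j ≠ i → x' j = x j) ∧
            -(c i / x i) - δ ≤ -(c i / x' i) := by
  intro v x xx f hv hF i δ hδ hδle
  obtain ⟨h1, h2, h3, h4, h5, h6, h7, h8, h9, h10⟩ := hF
  have hxi : 0 < x i := lt_of_lt_of_le (hbd i) (h8 i)
  set A : ℝ := c i / x i + δ with hA
  have hA0 : 0 < A := add_pos (div_pos (hc i) hxi) hδ
  have hcA : c i / A < x i := by
    rw [div_lt_iff₀ hA0]
    have h' : c i / x i < A := lt_add_of_pos_right _ hδ
    have := (div_lt_iff₀ hxi).mp h'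
    linarith
  have hcA0 : 0 < c i / A := div_pos (hc i) hA0
  have hbA : b i (d i) ≤ c i / A := by
    have hAb : A ≤ c i / b i (d i) := by
      rw [hA]; linarith [hδle]
    rw [le_div_iff₀ hA0]
    have := (le_div_iff₀ (hbd i)).mp hAb
    linarith
  refine ⟨x i - c i / A, by linarith, ?_⟩
  intro ε' hε'0 hε'ε
  have hxε : c i / A < x i - ε' := by linarith
  have hxε0 : 0 < x i - ε' := lt_trans hcA0 hxε
  set t : ℝ := (x i - ε') / x i with ht
  have ht0 : 0 ≤ t := le_of_lt (div_pos hxε0 hxi)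
  have ht1 : t ≤ 1 := by
    rw [ht, div_le_one hxi]; linarith
  have htx : t * x i = x i - ε' := by
    rw [ht]; field_simp
  refine ⟨Function.update x i (x i - ε'),
    (fun j k => if j = i then t * xx i k else xx j k),
    (fun j e => if j = i then t * f i e else f j e), ?_, ?_, ?_⟩
  · -- Feasibility
    refine ⟨?_, ?_, ?_, ?_, ?_, ?_, ?_, ?_, ?_, ?_⟩
    · intro j
      by_cases hj : j = i
      · subst hj; simp [le_of_lt hxε0]
      · simp [Function.update_of_ne hj, h1 j]
    · intro j k
      by_cases hj : j = i
      · simp only [hj, if_pos rfl]; exact mul_nonneg ht0 (h2 i k)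
      · simp only [if_neg hj]; exact h2 j k
    · intro j e
      by_cases hj : j = i
      · simp only [hj, if_pos rfl]; exact mul_nonneg ht0 (h3 i e)
      · simp only [if_neg hj]; exact h3 j e
    · intro j e he
      by_cases hj : j = i
      · subst hj; simp [h4 j e he]
      · simp only [if_neg hj]; exact h4 j e he
    · intro j
      by_cases hj : j = i
      · subst hj
        simp only [Function.update_self, eq_self_iff_true, ite_true]
        rw [← Finset.mul_sum, ← h5 j, htx]
      · simp only [Function.update_of_ne hj, if_neg hj]
        exact h5 j
    · intro j
      by_cases hj : j = i
      · subst hj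
        simp only [Function.update_self, eq_self_iff_true, ite_true]
        rw [← Finset.mul_sum, ← mul_add, ← h6 j, htx]
      · simp only [Function.update_of_ne hj, if_neg hj]
        exact h6 j
    · intro a j haj
      by_cases ha : a = i
      · subst ha
        simp only [eq_self_iff_true, ite_true]
        rw [← Finset.mul_sum, ← Finset.mul_sum, h7 a j haj]
        ring
      · simp only [if_neg ha]
        exact h7 a j haj
    · intro j
      by_cases hj : j = i
      · subst hj
        simp only [Function.update_self]
        exact le_of_lt (lt_of_le_of_lt hbA hxε)
      · simp only [Function.update_of_ne hj]; exact h8 j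
    · intro k
      have key1 : (∑ j, (if j = i then t * xx i k else xx j k))
          = (∑ j, xx j k) - (1 - t) * xx i k := by
        have h' : ∀ j : Fin n, (if j = i then t * xx i k else xx j k)
            = xx j k - (if j = i then (1 - t) * xx i k else 0) := by
          intro j
          by_cases hj : j = i
          · subst hj; simp only [eq_self_iff_true, ite_true]; ring
          · simp [hj]
        rw [Finset.sum_congr rfl (fun j _ => h' j), Finset.sum_sub_distrib,
          Finset.sum_ite_eq' Finset.univ i (fun _ => (1 - t) * xx i k)]
        simp
      have key2 : (∑ j, ∑ e ∈ E.filter (fun e => e.2 = k),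
            (if j = i then t * f i e else f j e))
          = (∑ j, ∑ e ∈ E.filter (fun e => e.2 = k), f j e)
            - (1 - t) * ∑ e ∈ E.filter (fun e => e.2 = k), f i e := by
        have h' : ∀ j : Fin n, (∑ e ∈ E.filter (fun e => e.2 = k),
              (if j = i then t * f i e else f j e))
            = (∑ e ∈ E.filter (fun e => e.2 = k), f j e)
              - (if j = i then (1 - t) * ∑ e ∈ E.filter (fun e => e.2 = k), f i e else 0) := by
          intro j
          by_cases hj : j = i
          · subst hj
            simp only [eq_self_iff_true, ite_true, ← Finset.mul_sum]
            ring
          · simp [hj]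
        rw [Finset.sum_congr rfl (fun j _ => h' j), Finset.sum_sub_distrib,
          Finset.sum_ite_eq' Finset.univ i]
        simp
      rw [key1, key2]
      by_cases hk : k = i
      · subst hk
        have hxx : xx k k + ∑ e ∈ E.filter (fun e => e.2 = k), f k e = x k := (h6 k).symm
        have h1t : (1 - t) * xx k k + (1 - t) * ∑ e ∈ E.filter (fun e => e.2 = k), f k e
            = ε' := by
          rw [← mul_add, hxx]
          have : (1 - t) * x k = x k - t * x k := by ring
          rw [this, htx]; ring
        have hvk : Function.update v k (v k - ε') k = v k - ε' := by simp
        rw [hvk]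
        have := h9 k
        linarith
      · have hvk : Function.update v i (v i - ε') k = v k := Function.update_of_ne hk _ _
        rw [hvk]
        have hnn : 0 ≤ (1 - t) * xx i k := mul_nonneg (by linarith) (h2 i k)
        have hnn2 : 0 ≤ (1 - t) * ∑ e ∈ E.filter (fun e => e.2 = k), f i e :=
          mul_nonneg (by linarith) (Finset.sum_nonneg fun e _ => h3 i e)
        have := h9 k
        linarith
    · intro a j
      refine le_trans (Finset.sum_le_sum ?_) (h10 a j)
      intro k _
      by_cases hk : k = i
      · subst hk
        simp only [eq_self_iff_true, ite_true]
        exact mul_le_of_le_one_left (h2 k a) ht1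
      · simp [hk]
  · intro j hj
    exact Function.update_of_ne hj _ _
  · have hx'i : Function.update x i (x i - ε') i = x i - ε' := by simp
    rw [hx'i]
    have h' : c i / (x i - ε') ≤ A := by
      rw [div_le_iff₀ hxε0]
      have := (div_lt_iff₀ hA0).mp hxε
      linarith
    rw [hA] at h'
    linarith
end
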